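/- arXiv:2103.05736 — 2 statements merged into one kernel-verified Lean document; each statement's English description precedes it below -/
import Mathlib

section
/- For every m ∈ P_2(S), the set {m' ∈ P_2(S) : m' ⪯ m} is compact in (P_2(S), W_2). -/
open MeasureTheory Filter Set
open scoped ENNReal NNReal

noncomputable section

namespace MFOS

/-- Euclidean state space `ℝ^d`. -/
abbrev Rd (d : ℕ) := Fin d → ℝ

/-- The extended state space `S = ℝ^d × {0,1}`, where `{0,1}` is encoded by `Bool`. -/
abbrev Sd (d : ℕ) := Rd d × Bool

/-- real value of the survival indicator -/
def bToR (i : Bool) : ℝ := if i then 1 else 0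

/-- a distance on `S` -/
def dS {d : ℕ} (p q : Sd d) : ℝ := ‖p.1 - q.1‖ + |bToR p.2 - bToR q.2|

/-- The 2-Wasserstein distance between two measures, associated with a cost
function `dE` on the underlying space. -/
def W2 {E : Type*} [MeasurableSpace E] (dE : E → E → ℝ) (μ ν : Measure E) : ℝ :=
  sInf { r : ℝ | ∃ π : Measure (E × E), IsProbabilityMeasure π ∧
    π.map Prod.fst = μ ∧ π.map Prod.snd = ν ∧
    r = Real.sqrt (∫ p, dE p.1 p.2 ^ 2 ∂π) }

/-- `P₂(S)` : square integrable probability measures on `S` -/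
def MemP2S {d : ℕ} (m : Measure (Sd d)) : Prop :=
  IsProbabilityMeasure m ∧ Integrable (fun p : Sd d => ‖p.1‖ ^ 2) m

/-- the 2-Wasserstein distance on `P₂(S)` -/
def W2S {d : ℕ} (m m' : Measure (Sd d)) : ℝ := W2 dS m m'

/-- `P₂(ℝ^d)` : square integrable probability measures on `ℝ^d` -/
def MemP2R {d : ℕ} (μ : Measure (Rd d)) : Prop :=
  IsProbabilityMeasure μ ∧ Integrable (fun x : Rd d => ‖x‖ ^ 2) μ

/-- the 2-Wasserstein distance on `P₂(ℝ^d)` -/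
def W2R {d : ℕ} (μ ν : Measure (Rd d)) : ℝ := W2 (fun x y : Rd d => ‖x - y‖) μ ν

/-- the sub-probability marginal `A ↦ m(A × {i})` on `ℝ^d` -/
def slice {d : ℕ} (m : Measure (Sd d)) (i : Bool) : Measure (Rd d) :=
  (m.restrict (Prod.snd ⁻¹' {i})).map Prod.fst

/-- the convex combination `l•m' + (1-l)•m` -/
def mix {E : Type*} [MeasurableSpace E] (l : ℝ) (m' m : Measure E) : Measure E :=
  ENNReal.ofReal l • m' + ENNReal.ofReal (1 - l) • m

/-- the partial (stopping) order `m' ⪯ m` on `P₂(S)`: `m'` is obtained from `m` by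
randomly stopping a proportion `1 - p(x)` of the surviving particles. -/
def StopOrder {d : ℕ} (m' m : Measure (Sd d)) : Prop :=
  ∃ p : Rd d → ℝ, Measurable p ∧ (∀ x, p x ∈ Icc (0:ℝ) 1) ∧
    slice m' true = (slice m true).withDensity (fun x => ENNReal.ofReal (p x)) ∧
    slice m' false =
      (slice m true).withDensity (fun x => ENNReal.ofReal (1 - p x)) + slice m false

section Canonical

variable (d : ℕ) (T : ℝ)

/-- The canonical path space `Ω = C⁰([-1,T],ℝ^d) × 𝕀⁰([-1,T])`:
`X` is continuous on `[-1,T]` and constant on `[-1,0)`; `I` is nonincreasing,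
càdlàg, `{0,1}`-valued, constant on `[-1,0)` and equal to `0` at `T`. -/
structure CanonPath where
  X : ℝ → Rd d
  I : ℝ → Bool
  contX : ContinuousOn X (Icc (-1) T)
  constX : ∀ s ∈ Ico (-1:ℝ) 0, X s = X (-1)
  constI : ∀ s ∈ Ico (-1:ℝ) 0, I s = I (-1)
  antitoneI : ∀ s ∈ Icc (-1:ℝ) T, ∀ t ∈ Icc (-1:ℝ) T, s ≤ t → I t ≤ I s
  rightContI : ∀ t ∈ Ico (-1:ℝ) T, ∃ ε > 0, ∀ s ∈ Ico t (t + ε), I s = I t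
  endI : I T = false

variable {d T}

/-- the canonical process `Y = (X, I)` -/
def YS (ω : CanonPath d T) (s : ℝ) : Sd d := (ω.X s, ω.I s)

/-- the canonical σ-algebra, generated by the evaluation maps -/
instance : MeasurableSpace (CanonPath d T) :=
  ⨆ s ∈ Icc (-1:ℝ) T, MeasurableSpace.comap (fun ω : CanonPath d T => YS ω s) inferInstance

open Classical in
/-- the left limit `I_{t-}` (`I` being nonincreasing, it equals the infimum of `I` before `t`) -/
def Ileft (ω : CanonPath d T) (t : ℝ) : Bool :=
  if ∀ s ∈ Ico (-1:ℝ) t, ω.I s = true then true else false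

/-- the left limit `Y_{t-}` (`X` being continuous) -/
def Yleft (ω : CanonPath d T) (t : ℝ) : Sd d := (ω.X t, Ileft ω t)

/-- the stopping time `τ = inf{t ≥ 0 : I_t = 0}` -/
def tauCP (ω : CanonPath d T) : ℝ := sInf {t : ℝ | 0 ≤ t ∧ ω.I t = false}

/-- the flow of marginal laws `s ↦ P_{Y_s}` -/
def lawY (P : Measure (CanonPath d T)) (s : ℝ) : Measure (Sd d) :=
  P.map (fun ω => YS ω s)

/-- the flow of left-limit marginal laws `s ↦ P_{Y_{s-}}` -/
def lawYleft (P : Measure (CanonPath d T)) (s : ℝ) : Measure (Sd d) :=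
  P.map (fun ω => Yleft ω s)

/-- `Z` is a `P`-martingale on `[t,T]` w.r.t. the canonical filtration, in the
(equivalent) test-function formulation: increments of `Z` are orthogonal to every
bounded measurable functional of the path stopped at the earlier time. -/
def IsMartOnCP (Z : ℝ → CanonPath d T → ℝ) (P : Measure (CanonPath d T)) (t : ℝ) : Prop :=
  ∀ s₁ s₂ : ℝ, t ≤ s₁ → s₁ ≤ s₂ → s₂ ≤ T →
    ∀ φ : (ℝ → Sd d) → ℝ, Measurable φ → (∃ C, ∀ y, |φ y| ≤ C) →
      ∫ ω, (Z s₂ ω - Z s₁ ω) * φ (fun r => YS ω (min (max r (-1)) s₁)) ∂P = 0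

/-- the process `M = X - ∫_0^· b(r, X_r, P_{Y_r}) I_r dr` -/
def Mproc (b : ℝ → Rd d → Measure (Sd d) → Rd d)
    (P : Measure (CanonPath d T)) (s : ℝ) (ω : CanonPath d T) : Rd d :=
  ω.X s - ∫ r in Ioc (0:ℝ) s, bToR (ω.I r) • b r (ω.X r) (lawY P r)

/-- the process `N = M M^⊤ - ∫_0^· σ²(r, X_r, P_{Y_r}) I_r dr` (entry `(j,k)`) -/
def Nproc (b : ℝ → Rd d → Measure (Sd d) → Rd d)
    (σm : ℝ → Rd d → Measure (Sd d) → Matrix (Fin d) (Fin d) ℝ)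
    (P : Measure (CanonPath d T)) (j k : Fin d) (s : ℝ) (ω : CanonPath d T) : ℝ :=
  Mproc b P s ω j * Mproc b P s ω k -
    ∫ r in Ioc (0:ℝ) s,
      bToR (ω.I r) * ((σm r (ω.X r) (lawY P r) * σm r (ω.X r) (lawY P r)) j k)

/-- The set `𝒫(t,m)` of weak solutions of the stopped McKean-Vlasov SDE started
at time `t` from the distribution `m`. -/
def Adm (b : ℝ → Rd d → Measure (Sd d) → Rd d)
    (σm : ℝ → Rd d → Measure (Sd d) → Matrix (Fin d) (Fin d) ℝ)
    (t : ℝ) (m : Measure (Sd d)) : Set (Measure (CanonPath d T)) :=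
  {P | IsProbabilityMeasure P ∧ lawYleft P t = m ∧
    (∀ᵐ ω ∂P, ∀ s ∈ Ico (-1:ℝ) t, YS ω s = YS ω (-1)) ∧
    (∀ j : Fin d, IsMartOnCP (fun s ω => Mproc b P s ω j) P t) ∧
    (∀ j k : Fin d, IsMartOnCP (Nproc b σm P j k) P t)}

/-- the reward functional `J(t,P) = ∫_t^T F(r, P_{Y_r}) dr + g(P_{Y_T})` -/
def Jfun (F : ℝ → Measure (Sd d) → ℝ) (g : Measure (Sd d) → ℝ)
    (t : ℝ) (P : Measure (CanonPath d T)) : ℝ :=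
  (∫ r in Ioc t T, F r (lawY P r)) + g (lawY P T)

variable (d T) in
/-- the value function `V(t,m) = sup_{P ∈ 𝒫(t,m)} J(t,P)` -/
def Vfun (b : ℝ → Rd d → Measure (Sd d) → Rd d)
    (σm : ℝ → Rd d → Measure (Sd d) → Matrix (Fin d) (Fin d) ℝ)
    (F : ℝ → Measure (Sd d) → ℝ) (g : Measure (Sd d) → ℝ)
    (t : ℝ) (m : Measure (Sd d)) : ℝ :=
  sSup (Jfun (d := d) (T := T) F g t '' Adm (d := d) (T := T) b σm t m)

end Canonical

/-- the aggregated running reward `F(t,m) = ∫ f(t,x,m) m(dx,1)` -/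
def Fint {d : ℕ} (f : ℝ → Rd d → Measure (Sd d) → ℝ) (t : ℝ) (m : Measure (Sd d)) : ℝ :=
  ∫ x, f t x m ∂(slice m true)

/-- the extension of `g` to `P₂(S)` by `g(m) := g(m(·,{0,1}))` -/
def gext {d : ℕ} (g : Measure (Rd d) → ℝ) (m : Measure (Sd d)) : ℝ :=
  g (m.map Prod.fst)

/-- (entrywise) Frobenius norm of a matrix -/
def matNorm {d : ℕ} (A : Matrix (Fin d) (Fin d) ℝ) : ℝ :=
  Real.sqrt (∑ j, ∑ k, A j k ^ 2)

/-- Standing assumptions on the coefficients `b, σ`: `σ` is symmetric nonnegative,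
`b, σ` are continuous in `t` and uniformly Lipschitz continuous in `(x,m)`. -/
structure CoeffAssumption (d : ℕ) (T : ℝ)
    (b : ℝ → Rd d → Measure (Sd d) → Rd d)
    (σm : ℝ → Rd d → Measure (Sd d) → Matrix (Fin d) (Fin d) ℝ) : Prop where
  psd : ∀ t x m, (σm t x m).PosSemidef
  contb : ∀ x m, MemP2S m → ∀ j : Fin d, ContinuousOn (fun t => b t x m j) (Icc 0 T)
  contσ : ∀ x m, MemP2S m → ∀ j k : Fin d, ContinuousOn (fun t => σm t x m j k) (Icc 0 T)
  lip : ∃ L, 0 ≤ L ∧ ∀ t ∈ Icc (0:ℝ) T, ∀ x x' m m', MemP2S m → MemP2S m' →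
    ‖b t x m - b t x' m'‖ + matNorm (σm t x m - σm t x' m') ≤ L * (‖x - x'‖ + W2S m m')

/-- Standing assumptions on the running reward `f`: Borel measurable, quadratic
growth in `x`, and the aggregated reward `F` is continuous on `[0,T] × P₂(S)`. -/
structure CostAssumption (d : ℕ) (T : ℝ) (f : ℝ → Rd d → Measure (Sd d) → ℝ) : Prop where
  meas : ∀ m, Measurable (fun p : ℝ × Rd d => f p.1 p.2 m)
  growth : ∀ t m, MemP2S m → ∃ C, ∀ x, |f t x m| ≤ C * (1 + ‖x‖ ^ 2)
  contF : ∀ t ∈ Icc (0:ℝ) T, ∀ m, MemP2S m → ∀ ε > 0, ∃ η > 0,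
    ∀ t' ∈ Icc (0:ℝ) T, ∀ m', MemP2S m' → |t' - t| < η → W2S m' m < η →
      |Fint f t' m' - Fint f t m| < ε

/-- Standing assumptions on the terminal reward `g`: upper semicontinuous and
locally bounded on `P₂(ℝ^d)`. -/
structure TerminalAssumption (d : ℕ) (g : Measure (Rd d) → ℝ) : Prop where
  usc : ∀ μ, MemP2R μ → ∀ ε > 0, ∃ η > 0, ∀ μ', MemP2R μ' → W2R μ' μ < η → g μ' < g μ + ε
  locbdd : ∀ μ, MemP2R μ → ∃ η > 0, ∃ C, ∀ μ', MemP2R μ' → W2R μ' μ < η → |g μ'| ≤ C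

/-- `u ∈ C²₂([0,T] × P₂(S))` : `u` admits a jointly continuous linear functional
derivative `dm` with quadratic growth (locally uniformly), which is twice
differentiable in `x` with jointly continuous derivatives, the second one being
bounded in `x` locally uniformly in `(t,m)`; and `u` is differentiable in `t`. -/
structure C12S (d : ℕ) (T : ℝ) (u : ℝ → Measure (Sd d) → ℝ) where
  dm : ℝ → Measure (Sd d) → Rd d → Bool → ℝ
  dt : ℝ → Measure (Sd d) → ℝ
  Dx : ℝ → Measure (Sd d) → Rd d → Bool → (Rd d →L[ℝ] ℝ)
  Dxx : ℝ → Measure (Sd d) → Rd d → Bool → (Rd d →L[ℝ] Rd d →L[ℝ] ℝ)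
  dt_spec : ∀ t ∈ Icc (0:ℝ) T, ∀ m, MemP2S m →
    HasDerivWithinAt (fun s => u s m) (dt t m) (Icc 0 T) t
  fund : ∀ t ∈ Icc (0:ℝ) T, ∀ m m', MemP2S m → MemP2S m' →
    u t m' - u t m = ∫ l in Icc (0:ℝ) 1,
      ((∫ p, dm t (mix l m' m) p.1 p.2 ∂m') - ∫ p, dm t (mix l m' m) p.1 p.2 ∂m)
  dm_cont : ∀ t m x i, MemP2S m → ∀ ε > 0, ∃ η > 0, ∀ t' m' x', MemP2S m' →
    |t' - t| < η → W2S m' m < η → ‖x' - x‖ < η → |dm t' m' x' i - dm t m x i| < ε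
  dm_growth : ∀ t m, MemP2S m → ∃ C ≥ 0, ∃ η > 0, ∀ t' m' x i, MemP2S m' →
    |t' - t| ≤ η → W2S m' m ≤ η → |dm t' m' x i| ≤ C * (1 + ‖x‖ ^ 2)
  Dx_spec : ∀ t m x i, HasFDerivAt (fun y => dm t m y i) (Dx t m x i) x
  Dxx_spec : ∀ t m x i, HasFDerivAt (fun y => Dx t m y i) (Dxx t m x i) x
  dt_cont : ∀ t m, MemP2S m → ∀ ε > 0, ∃ η > 0, ∀ t' m', MemP2S m' →
    |t' - t| < η → W2S m' m < η → |dt t' m' - dt t m| < ε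
  Dx_cont : ∀ t m x i, MemP2S m → ∀ ε > 0, ∃ η > 0, ∀ t' m' x', MemP2S m' →
    |t' - t| < η → W2S m' m < η → ‖x' - x‖ < η → ‖Dx t' m' x' i - Dx t m x i‖ < ε
  Dxx_cont : ∀ t m x i, MemP2S m → ∀ ε > 0, ∃ η > 0, ∀ t' m' x', MemP2S m' →
    |t' - t| < η → W2S m' m < η → ‖x' - x‖ < η → ‖Dxx t' m' x' i - Dxx t m x i‖ < ε
  Dxx_bdd : ∀ t m, MemP2S m → ∃ C ≥ 0, ∃ η > 0, ∀ t' m' x i, MemP2S m' →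
    |t' - t| ≤ η → W2S m' m ≤ η → ‖Dxx t' m' x i‖ ≤ C

/-- `D_I u = δ_m u(·,·,x,1) - δ_m u(·,·,x,0)` -/
def DIu {d : ℕ} {T : ℝ} {u : ℝ → Measure (Sd d) → ℝ} (C : C12S d T u)
    (t : ℝ) (m : Measure (Sd d)) (x : Rd d) : ℝ :=
  C.dm t m x true - C.dm t m x false

/-- the generator `𝕃u(t,m) = ∂_t u + ∫ [b·∂_x δ_m u₁ + ½ σ² : ∂²_{xx} δ_m u₁] m(dx,1)` -/
def Lop {d : ℕ} {T : ℝ}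
    (b : ℝ → Rd d → Measure (Sd d) → Rd d)
    (σm : ℝ → Rd d → Measure (Sd d) → Matrix (Fin d) (Fin d) ℝ)
    {u : ℝ → Measure (Sd d) → ℝ} (C : C12S d T u)
    (t : ℝ) (m : Measure (Sd d)) : ℝ :=
  C.dt t m + ∫ x, (C.Dx t m x true (b t x m)
    + (1/2) * ∑ j, ∑ k, ((σm t x m * σm t x m) j k)
        * C.Dxx t m x true (Pi.single j 1) (Pi.single k 1)) ∂(slice m true)

/-- the set of values `-(𝕃u + F)(t,m')` over admissible stopping strategies
`m' ∈ C_u(t,m) = {m' ⪯ m : u(t,m') = u(t,m)}` -/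
def obstacleSet {d : ℕ} {T : ℝ}
    (b : ℝ → Rd d → Measure (Sd d) → Rd d)
    (σm : ℝ → Rd d → Measure (Sd d) → Matrix (Fin d) (Fin d) ℝ)
    {u : ℝ → Measure (Sd d) → ℝ} (C : C12S d T u)
    (F : ℝ → Measure (Sd d) → ℝ) (t : ℝ) (m : Measure (Sd d)) : Set ℝ :=
  {r | ∃ m', MemP2S m' ∧ StopOrder m' m ∧ u t m' = u t m ∧
    r = -(Lop b σm C t m' + F t m')}


/-- the Skorokhod distance on the canonical path space -/
def skorokhodDist {d : ℕ} {T : ℝ} (ω ω' : CanonPath d T) : ℝ :=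
  sInf { ε : ℝ | 0 < ε ∧ ∃ lam : ℝ → ℝ, StrictMonoOn lam (Icc (-1) T) ∧
      lam '' Icc (-1) T = Icc (-1) T ∧
      ∀ s ∈ Icc (-1:ℝ) T, |lam s - s| ≤ ε ∧ dS (YS ω (lam s)) (YS ω' s) ≤ ε }

/-- weak convergence of probability measures on the canonical space, tested
against bounded measurable functionals continuous for the Skorokhod distance -/
def WeakConvSK {d : ℕ} {T : ℝ} (P : ℕ → Measure (CanonPath d T))
    (Q : Measure (CanonPath d T)) : Prop :=
  ∀ φ : CanonPath d T → ℝ, Measurable φ → (∃ C, ∀ ω, |φ ω| ≤ C) →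
    (∀ ω, ∀ ε > 0, ∃ η > 0, ∀ ω', skorokhodDist ω ω' < η → |φ ω - φ ω'| < ε) →
    Tendsto (fun n => ∫ ω, φ ω ∂(P n)) atTop (nhds (∫ ω, φ ω ∂Q))

/-- `Z` is a `P`-martingale on `[0,T]` w.r.t. the filtration generated by `Y`,
in the test-function formulation. -/
def IsMartGen {k : ℕ} {Ω' : Type*} [MeasurableSpace Ω'] (Y : ℝ → Ω' → Rd k)
    (Z : ℝ → Ω' → ℝ) (P : Measure Ω') (T : ℝ) : Prop :=
  ∀ s₁ s₂ : ℝ, 0 ≤ s₁ → s₁ ≤ s₂ → s₂ ≤ T →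
    ∀ n : ℕ, ∀ r : Fin n → ℝ, (∀ i, r i ∈ Icc (0:ℝ) s₁) →
      ∀ φ : (Fin n → Rd k) → ℝ, Measurable φ → (∃ C, ∀ v, |φ v| ≤ C) →
        ∫ ω, (Z s₂ ω - Z s₁ ω) * φ (fun i => Y (r i) ω) ∂P = 0

/-- `u ∈ C²₂([0,T] × P₂(ℝ^k))` -/
structure C12E (k : ℕ) (T : ℝ) (u : ℝ → Measure (Rd k) → ℝ) where
  dm : ℝ → Measure (Rd k) → Rd k → ℝ
  dt : ℝ → Measure (Rd k) → ℝ
  Dy : ℝ → Measure (Rd k) → Rd k → (Rd k →L[ℝ] ℝ)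
  Dyy : ℝ → Measure (Rd k) → Rd k → (Rd k →L[ℝ] Rd k →L[ℝ] ℝ)
  dt_spec : ∀ t ∈ Icc (0:ℝ) T, ∀ m, MemP2R m →
    HasDerivWithinAt (fun s => u s m) (dt t m) (Icc 0 T) t
  fund : ∀ t ∈ Icc (0:ℝ) T, ∀ m m', MemP2R m → MemP2R m' →
    u t m' - u t m = ∫ l in Icc (0:ℝ) 1,
      ((∫ y, dm t (mix l m' m) y ∂m') - ∫ y, dm t (mix l m' m) y ∂m)
  dm_cont : ∀ t m y, MemP2R m → ∀ ε > 0, ∃ η > 0, ∀ t' m' y', MemP2R m' →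
    |t' - t| < η → W2R m' m < η → ‖y' - y‖ < η → |dm t' m' y' - dm t m y| < ε
  dm_growth : ∀ t m, MemP2R m → ∃ C ≥ 0, ∃ η > 0, ∀ t' m' y, MemP2R m' →
    |t' - t| ≤ η → W2R m' m ≤ η → |dm t' m' y| ≤ C * (1 + ‖y‖ ^ 2)
  Dy_spec : ∀ t m y, HasFDerivAt (fun z => dm t m z) (Dy t m y) y
  Dyy_spec : ∀ t m y, HasFDerivAt (fun z => Dy t m z) (Dyy t m y) y
  dt_cont : ∀ t m, MemP2R m → ∀ ε > 0, ∃ η > 0, ∀ t' m', MemP2R m' →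
    |t' - t| < η → W2R m' m < η → |dt t' m' - dt t m| < ε
  Dy_cont : ∀ t m y, MemP2R m → ∀ ε > 0, ∃ η > 0, ∀ t' m' y', MemP2R m' →
    |t' - t| < η → W2R m' m < η → ‖y' - y‖ < η → ‖Dy t' m' y' - Dy t m y‖ < ε
  Dyy_cont : ∀ t m y, MemP2R m → ∀ ε > 0, ∃ η > 0, ∀ t' m' y', MemP2R m' →
    |t' - t| < η → W2R m' m < η → ‖y' - y‖ < η → ‖Dyy t' m' y' - Dyy t m y‖ < ε
  Dyy_bdd : ∀ t m, MemP2R m → ∃ C ≥ 0, ∃ η > 0, ∀ t' m' y, MemP2R m' →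
    |t' - t| ≤ η → W2R m' m ≤ η → ‖Dyy t' m' y‖ ≤ C

/-- a (time-independent) function on `P₂(S)` admitting a linear functional derivative -/
structure LinFunDeriv (d : ℕ) (u : Measure (Sd d) → ℝ) where
  dm : Measure (Sd d) → Rd d → Bool → ℝ
  fund : ∀ m m', MemP2S m → MemP2S m' →
    u m' - u m = ∫ l in Icc (0:ℝ) 1,
      ((∫ p, dm (mix l m' m) p.1 p.2 ∂m') - ∫ p, dm (mix l m' m) p.1 p.2 ∂m)
  dm_cont : ∀ m x i, MemP2S m → ∀ ε > 0, ∃ η > 0, ∀ m' x', MemP2S m' →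
    W2S m' m < η → ‖x' - x‖ < η → |dm m' x' i - dm m x i| < ε
  dm_growth : ∀ m, MemP2S m → ∃ C ≥ 0, ∃ η > 0, ∀ m' x i, MemP2S m' →
    W2S m' m ≤ η → |dm m' x i| ≤ C * (1 + ‖x‖ ^ 2)

/-- `D_I u` for a time-independent function -/
def DIu0 {d : ℕ} {u : Measure (Sd d) → ℝ} (L : LinFunDeriv d u)
    (m : Measure (Sd d)) (x : Rd d) : ℝ :=
  L.dm m x true - L.dm m x false


/-! ### Auxiliary machinery for the compactness theorem -/

section CompactAux

open MeasureTheory ENNReal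

variable {d : ℕ}

/-- embed a measure on `ℝ^d` into `S` with constant label `i` -/
def embS (i : Bool) (σ : Measure (Rd d)) : Measure (Sd d) :=
  σ.map (fun x => (x, i))

lemma measurable_pair (i : Bool) : Measurable (fun x : Rd d => (x, i)) :=
  measurable_id.prodMk measurable_const

lemma embS_apply (i : Bool) (σ : Measure (Rd d)) {E : Set (Sd d)} (hE : MeasurableSet E) :
    embS i σ E = σ ((fun x => (x, i)) ⁻¹' E) :=
  Measure.map_apply (measurable_pair i) hE

lemma embS_univ (i : Bool) (σ : Measure (Rd d)) : embS i σ Set.univ = σ Set.univ := by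
  rw [embS_apply i σ MeasurableSet.univ]; rfl

lemma measurableSet_sndLabel (i : Bool) : MeasurableSet (Prod.snd ⁻¹' {i} : Set (Sd d)) :=
  measurable_snd (MeasurableSet.singleton i)

lemma slice_embS_same (i : Bool) (σ : Measure (Rd d)) : slice (embS i σ) i = σ := by
  unfold slice embS
  rw [Measure.restrict_map (measurable_pair i) (measurableSet_sndLabel i)]
  have : (fun x : Rd d => (x, i)) ⁻¹' (Prod.snd ⁻¹' {i}) = Set.univ := by
    ext x; simp
  rw [this, Measure.restrict_univ, Measure.map_map measurable_fst (measurable_pair i)]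
  simp [Function.comp_def]

lemma slice_embS_ne (i j : Bool) (h : i ≠ j) (σ : Measure (Rd d)) :
    slice (embS i σ) j = 0 := by
  unfold slice embS
  rw [Measure.restrict_map (measurable_pair i) (measurableSet_sndLabel j)]
  have : (fun x : Rd d => (x, i)) ⁻¹' (Prod.snd ⁻¹' {j}) = ∅ := by
    ext x; simp [h]
  rw [this, Measure.restrict_empty]
  simp

lemma slice_add (κ κ' : Measure (Sd d)) (i : Bool) :
    slice (κ + κ') i = slice κ i + slice κ' i := by
  unfold slice
  rw [Measure.restrict_add, Measure.map_add _ _ measurable_fst]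

lemma slice_apply (κ : Measure (Sd d)) (i : Bool) {F : Set (Rd d)} (hF : MeasurableSet F) :
    slice κ i F = κ (Prod.fst ⁻¹' F ∩ Prod.snd ⁻¹' {i}) := by
  unfold slice
  rw [Measure.map_apply measurable_fst hF,
    Measure.restrict_apply (measurable_fst hF)]

/-- every measure on `S` decomposes into its two labelled slices -/
lemma decomp_slices (κ : Measure (Sd d)) :
    κ = embS true (slice κ true) + embS false (slice κ false) := by
  ext E hE
  rw [Measure.add_apply, embS_apply _ _ hE, embS_apply _ _ hE,
    slice_apply _ _ ((measurable_pair true) hE),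
    slice_apply _ _ ((measurable_pair false) hE)]
  have h1 : Prod.fst ⁻¹' ((fun x => (x, true)) ⁻¹' E) ∩ Prod.snd ⁻¹' {true}
      = E ∩ Prod.snd ⁻¹' {true} := by
    ext ⟨x, b⟩; by_cases hb : b = true <;> simp [hb]
  have h2 : Prod.fst ⁻¹' ((fun x => (x, false)) ⁻¹' E) ∩ Prod.snd ⁻¹' {false}
      = E ∩ Prod.snd ⁻¹' {false} := by
    ext ⟨x, b⟩; by_cases hb : b = false <;> simp [hb]
  rw [h1, h2, ← measure_union _ (hE.inter (measurableSet_sndLabel false))]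
  · congr 1
    ext ⟨x, b⟩; cases b <;> simp
  · exact Set.disjoint_left.2 (by rintro ⟨x, b⟩ ⟨-, hb1⟩ ⟨-, hb2⟩; simp_all)

lemma map_fst_embS (i : Bool) (σ : Measure (Rd d)) : (embS i σ).map Prod.fst = σ := by
  unfold embS
  rw [Measure.map_map measurable_fst (measurable_pair i)]
  simp [Function.comp_def]

instance embS_isFiniteMeasure (i : Bool) (σ : Measure (Rd d)) [IsFiniteMeasure σ] :
    IsFiniteMeasure (embS i σ) := by
  constructor
  rw [embS_univ]
  exact measure_lt_top σ _


variable {d : ℕ}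

/-- grid map: integer coordinates of the cube of mesh `δ` containing `x` -/
def gridMap (δ : ℝ) (x : Rd d) : Fin d → ℤ := fun i => ⌊x i / δ⌋

/-- the cube of mesh `δ` with integer coordinates `z` -/
def gridCell (δ : ℝ) (z : Fin d → ℤ) : Set (Rd d) := gridMap δ ⁻¹' {z}

lemma measurable_gridMap (δ : ℝ) : Measurable (gridMap (d := d) δ) := by
  unfold gridMap
  exact measurable_pi_lambda _ fun i => by fun_prop

lemma measurableSet_gridCell (δ : ℝ) (z : Fin d → ℤ) : MeasurableSet (gridCell δ z) :=
  measurable_gridMap δ (MeasurableSet.singleton z)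

lemma pairwise_disjoint_gridCell (δ : ℝ) :
    Pairwise (Function.onFun Disjoint (gridCell (d := d) δ)) := by
  intro z z' hzz'
  refine Set.disjoint_left.2 fun x hx hx' => hzz' ?_
  unfold gridCell at hx hx'
  rw [Set.mem_preimage, Set.mem_singleton_iff] at hx hx'
  rw [← hx, ← hx']

lemma iUnion_gridCell (δ : ℝ) : (⋃ z, gridCell (d := d) δ z) = Set.univ := by
  refine Set.eq_univ_of_forall fun x => Set.mem_iUnion.2 ⟨gridMap δ x, rfl⟩

lemma norm_sub_le_of_mem_gridCell {δ : ℝ} (hδ : 0 < δ) {z : Fin d → ℤ} {x y : Rd d}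
    (hx : x ∈ gridCell δ z) (hy : y ∈ gridCell δ z) : ‖x - y‖ ≤ δ := by
  unfold gridCell at hx hy
  rw [Set.mem_preimage, Set.mem_singleton_iff] at hx hy
  refine (pi_norm_le_iff_of_nonneg hδ.le).2 fun i => ?_
  have hfloor : ⌊x i / δ⌋ = ⌊y i / δ⌋ := by
    have := congrFun hx i; have := congrFun hy i
    simp only [gridMap] at *; omega
  have h1 : x i - y i = δ * (x i / δ - y i / δ) := by
    field_simp
  have h2 : |x i / δ - y i / δ| < 1 := by
    have hxf : x i / δ - (⌊x i / δ⌋ : ℝ) = Int.fract (x i / δ) := rfl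
    have hyf : y i / δ - (⌊y i / δ⌋ : ℝ) = Int.fract (y i / δ) := rfl
    have : x i / δ - y i / δ = Int.fract (x i / δ) - Int.fract (y i / δ) := by
      rw [← hxf, ← hyf, hfloor]; ring
    rw [this, abs_sub_lt_iff]
    constructor <;>
      nlinarith [Int.fract_nonneg (x i / δ), Int.fract_lt_one (x i / δ),
        Int.fract_nonneg (y i / δ), Int.fract_lt_one (y i / δ)]
  have : ‖x i - y i‖ = |x i - y i| := rfl
  rw [Pi.sub_apply, this, h1, abs_mul, abs_of_pos hδ]
  nlinarith

/-- auxiliary cancellation in `ℝ≥0∞` -/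
lemma ennreal_cancel_aux {x c y : ℝ≥0∞} (hc : c ≠ ∞) (hy : y ≠ ∞) (h0 : y = 0 → x = 0) :
    x / (c * y) * y = x / c := by
  rcases eq_or_ne y 0 with hy0 | hy0
  · rw [hy0, mul_zero, h0 hy0]; simp
  · rw [div_eq_mul_inv, ENNReal.mul_inv (Or.inr hy) (Or.inl hc), ← mul_assoc,
      mul_assoc (x * c⁻¹), ENNReal.inv_mul_cancel hy0 hy, mul_one, div_eq_mul_inv]

/-- the scalar identity making the cellwise couplings have the right marginals -/
lemma ennreal_scalar_sum {x₁ x₂ c y₁ y₂ : ℝ≥0∞} (hc : c ≠ ∞) (hc0 : c ≠ 0)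
    (hy₁ : y₁ ≠ ∞) (hy₂ : y₂ ≠ ∞) (h01 : y₁ = 0 → x₁ = 0) (h02 : y₂ = 0 → x₂ = 0)
    (hsum : x₁ + x₂ = c) :
    x₁ / (c * y₁) * y₁ + x₂ / (c * y₂) * y₂ = 1 := by
  rw [ennreal_cancel_aux hc hy₁ h01, ennreal_cancel_aux hc hy₂ h02,
    ENNReal.div_add_div_same, hsum, ENNReal.div_self hc0 hc]

lemma ennreal_div_mul_le {x y : ℝ≥0∞} : x / y * y ≤ x := by
  rcases eq_or_ne y 0 with h | h
  · simp [h]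
  rcases eq_or_ne y ∞ with h' | h'
  · simp [h', ENNReal.div_top]
  · rw [ENNReal.div_mul_cancel h h']


lemma dS_nonneg (p q : Sd d) : 0 ≤ dS p q :=
  add_nonneg (norm_nonneg _) (abs_nonneg _)

lemma measurable_dS : Measurable (fun pq : Sd d × Sd d => dS pq.1 pq.2) := by
  unfold dS
  have h1 : Measurable (fun pq : Sd d × Sd d => ‖pq.1.1 - pq.2.1‖) :=
    (measurable_fst.fst.sub measurable_snd.fst).norm
  have h2 : Measurable (fun pq : Sd d × Sd d => |bToR pq.1.2 - bToR pq.2.2|) := by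
    have : Measurable (fun ij : Bool × Bool => |bToR ij.1 - bToR ij.2|) :=
      measurable_of_countable _
    exact this.comp (measurable_fst.snd.prodMk measurable_snd.snd)
  exact h1.add h2

lemma W2S_nonneg (κ κ' : Measure (Sd d)) : 0 ≤ W2S κ κ' := by
  apply Real.sInf_nonneg
  rintro r ⟨π, -, -, -, hr⟩
  rw [hr]; exact Real.sqrt_nonneg _

lemma sum_restrict_gridCell (δ : ℝ) (σ : Measure (Rd d)) :
    Measure.sum (fun z => σ.restrict (gridCell δ z)) = σ := by
  ext E hE
  rw [Measure.sum_apply _ hE]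
  simp_rw [Measure.restrict_apply hE]
  rw [← measure_iUnion ?_ (fun z => hE.inter (measurableSet_gridCell δ z))]
  · rw [← Set.inter_iUnion, iUnion_gridCell, Set.inter_univ]
  · intro z z' hzz'
    exact (pairwise_disjoint_gridCell δ hzz').mono inf_le_right inf_le_right

lemma measure_sum_add {α : Type*} [MeasurableSpace α] {ι : Type*}
    (f g : ι → Measure α) :
    Measure.sum (fun i => f i + g i) = Measure.sum f + Measure.sum g := by
  ext E hE
  simp [Measure.sum_apply _ hE, ENNReal.tsum_add]

lemma tsum_gridCell (δ : ℝ) (σ : Measure (Rd d)) :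
    ∑' z, σ (gridCell δ z) = σ Set.univ := by
  rw [← measure_iUnion (pairwise_disjoint_gridCell δ) (measurableSet_gridCell δ),
    iUnion_gridCell]


lemma embS_zero (i : Bool) : embS (d := d) i 0 = 0 := by
  unfold embS; simp

lemma lintegral_prod_emb_le {δ : ℝ} (z : Fin d → ℤ)
    (σ σ' : Measure (Rd d)) [IsFiniteMeasure σ] [IsFiniteMeasure σ'] (i j : Bool) {c : ℝ}
    (hc : ∀ x ∈ gridCell δ z, ∀ y ∈ gridCell δ z, dS (x, i) (y, j) ^ 2 ≤ c) :
    ∫⁻ pq, ENNReal.ofReal (dS pq.1 pq.2 ^ 2)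
        ∂((embS i (σ.restrict (gridCell δ z))).prod (embS j (σ'.restrict (gridCell δ z))))
      ≤ ENNReal.ofReal c * (σ (gridCell δ z) * σ' (gridCell δ z)) := by
  set T1 : Set (Sd d) := (Prod.fst ⁻¹' gridCell δ z) ∩ (Prod.snd ⁻¹' {i}) with hT1
  set T2 : Set (Sd d) := (Prod.fst ⁻¹' gridCell δ z) ∩ (Prod.snd ⁻¹' {j}) with hT2
  have hT1m : MeasurableSet T1 :=
    (measurable_fst (measurableSet_gridCell δ z)).inter (measurableSet_sndLabel i)
  have hT2m : MeasurableSet T2 :=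
    (measurable_fst (measurableSet_gridCell δ z)).inter (measurableSet_sndLabel j)
  have hnull1 : embS i (σ.restrict (gridCell δ z)) T1ᶜ = 0 := by
    rw [embS_apply _ _ hT1m.compl]
    have hpre : (fun x : Rd d => (x, i)) ⁻¹' T1ᶜ = (gridCell δ z)ᶜ := by
      ext x; simp [hT1]
    rw [hpre, Measure.restrict_apply (measurableSet_gridCell δ z).compl,
      Set.compl_inter_self, measure_empty]
  have hnull2 : embS j (σ'.restrict (gridCell δ z)) T2ᶜ = 0 := by
    rw [embS_apply _ _ hT2m.compl]
    have hpre : (fun x : Rd d => (x, j)) ⁻¹' T2ᶜ = (gridCell δ z)ᶜ := by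
      ext x; simp [hT2]
    rw [hpre, Measure.restrict_apply (measurableSet_gridCell δ z).compl,
      Set.compl_inter_self, measure_empty]
  set P := (embS i (σ.restrict (gridCell δ z))).prod (embS j (σ'.restrict (gridCell δ z)))
    with hP
  have hnullP : P ((T1 ×ˢ T2)ᶜ) = 0 := by
    rw [Set.compl_prod_eq_union]
    refine measure_union_null ?_ ?_
    · rw [hP, Measure.prod_prod, hnull1, zero_mul]
    · rw [hP, Measure.prod_prod, hnull2, mul_zero]
  have hae : ∀ᵐ pq ∂P, ENNReal.ofReal (dS pq.1 pq.2 ^ 2) ≤ ENNReal.ofReal c := by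
    rw [ae_iff]
    refine measure_mono_null (fun pq hpq => ?_) hnullP
    simp only [Set.mem_setOf_eq, not_le] at hpq
    intro hmem
    rw [Set.mem_prod] at hmem
    obtain ⟨⟨h1a, h1b⟩, h2a, h2b⟩ := hmem
    rw [Set.mem_preimage, Set.mem_singleton_iff] at h1b h2b
    have hpq1 : pq.1 = (pq.1.1, i) := by rw [← h1b]
    have hpq2 : pq.2 = (pq.2.1, j) := by rw [← h2b]
    have := hc pq.1.1 h1a pq.2.1 h2a
    rw [← hpq1, ← hpq2] at this
    exact absurd (ENNReal.ofReal_le_ofReal this) (not_le.2 hpq)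
  calc ∫⁻ pq, ENNReal.ofReal (dS pq.1 pq.2 ^ 2) ∂P
      ≤ ∫⁻ _, ENNReal.ofReal c ∂P := lintegral_mono_ae hae
    _ = ENNReal.ofReal c * P Set.univ := lintegral_const _
    _ = ENNReal.ofReal c * (σ (gridCell δ z) * σ' (gridCell δ z)) := by
        rw [hP, ← Set.univ_prod_univ, Measure.prod_prod, embS_univ, embS_univ,
          Measure.restrict_apply_univ, Measure.restrict_apply_univ]


lemma W2S_le_of_grid {δ η : ℝ} (hδ0 : 0 < δ) (hδ1 : δ ≤ 1) (hη : 0 ≤ η)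
    (σ τ σ' τ' : Measure (Rd d))
    [IsFiniteMeasure σ] [IsFiniteMeasure τ] [IsFiniteMeasure σ'] [IsFiniteMeasure τ']
    (hsum : σ + τ = σ' + τ')
    (hprob : IsProbabilityMeasure (embS true σ + embS false τ))
    (hD : (∑' z : Fin d → ℤ,
        ((σ (gridCell δ z) - min (σ (gridCell δ z)) (σ' (gridCell δ z)))
          + (σ' (gridCell δ z) - min (σ (gridCell δ z)) (σ' (gridCell δ z)))))
      ≤ ENNReal.ofReal η) :
    W2S (embS true σ + embS false τ) (embS true σ' + embS false τ')
      ≤ Real.sqrt (δ ^ 2 + 4 * η) := by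
  classical
  set a : (Fin d → ℤ) → ℝ≥0∞ := fun z => σ (gridCell δ z) with ha
  set a' : (Fin d → ℤ) → ℝ≥0∞ := fun z => σ' (gridCell δ z) with ha'
  set b : (Fin d → ℤ) → ℝ≥0∞ := fun z => τ (gridCell δ z) with hb
  set b' : (Fin d → ℤ) → ℝ≥0∞ := fun z => τ' (gridCell δ z) with hb'
  set l : (Fin d → ℤ) → ℝ≥0∞ := fun z => min (a z) (a' z) with hl
  set k : (Fin d → ℤ) → ℝ≥0∞ := fun z => min (b z) (b' z) with hk
  have haf : ∀ z, a z ≠ ∞ := fun z => measure_ne_top σ _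
  have haf' : ∀ z, a' z ≠ ∞ := fun z => measure_ne_top σ' _
  have hbf : ∀ z, b z ≠ ∞ := fun z => measure_ne_top τ _
  have hbf' : ∀ z, b' z ≠ ∞ := fun z => measure_ne_top τ' _
  have hab : ∀ z, a z + b z = a' z + b' z := by
    intro z
    have := congrArg (fun ξ : Measure (Rd d) => ξ (gridCell δ z)) hsum
    simpa [Measure.add_apply] using this
  -- mass bookkeeping identities
  have hsum1 : ∀ z, (a' z - l z) + k z = b z := by
    intro z
    rcases le_total (a z) (a' z) with h | h
    · have hbb : b' z ≤ b z := by
        have h2 : a' z + b' z ≤ a' z + b z := by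
          rw [← hab z]; exact add_le_add_left h _
        exact (ENNReal.add_le_add_iff_left (haf' z)).1 h2
      have hlz : l z = a z := min_eq_left h
      have hkz : k z = b' z := min_eq_right hbb
      rw [hlz, hkz]
      have h3 : a z + ((a' z - a z) + b' z) = a z + b z := by
        rw [← add_assoc, add_tsub_cancel_of_le h, hab z]
      exact (ENNReal.add_right_inj (haf z)).1 h3
    · have hbb : b z ≤ b' z := by
        have h2 : a z + b z ≤ a z + b' z := by
          rw [hab z]; exact add_le_add_left h _
        exact (ENNReal.add_le_add_iff_left (haf z)).1 h2
      have hlz : l z = a' z := min_eq_right h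
      have hkz : k z = b z := min_eq_left hbb
      rw [hlz, hkz, tsub_self, zero_add]
  have hsum2 : ∀ z, (a z - l z) + k z = b' z := by
    intro z
    rcases le_total (a' z) (a z) with h | h
    · have hbb : b z ≤ b' z := by
        have h2 : a z + b z ≤ a z + b' z := by
          rw [hab z]; exact add_le_add_left h _
        exact (ENNReal.add_le_add_iff_left (haf z)).1 h2
      have hlz : l z = a' z := min_eq_right h
      have hkz : k z = b z := min_eq_left hbb
      rw [hlz, hkz]
      have h3 : a' z + ((a z - a' z) + b z) = a' z + b' z := by
        rw [← add_assoc, add_tsub_cancel_of_le h, ← hab z]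
      exact (ENNReal.add_right_inj (haf' z)).1 h3
    · have hbb : b' z ≤ b z := by
        have h2 : a' z + b' z ≤ a' z + b z := by
          rw [← hab z]; exact add_le_add_left h _
        exact (ENNReal.add_le_add_iff_left (haf' z)).1 h2
      have hlz : l z = a z := min_eq_left h
      have hkz : k z = b' z := min_eq_right hbb
      rw [hlz, hkz, tsub_self, zero_add]
  -- the four labelled component measures on each cell
  set A1 : (Fin d → ℤ) → Measure (Sd d) := fun z => embS true (σ.restrict (gridCell δ z))
    with hA1
  set A0 : (Fin d → ℤ) → Measure (Sd d) := fun z => embS false (τ.restrict (gridCell δ z))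
    with hA0
  set B1 : (Fin d → ℤ) → Measure (Sd d) := fun z => embS true (σ'.restrict (gridCell δ z))
    with hB1
  set B0 : (Fin d → ℤ) → Measure (Sd d) := fun z => embS false (τ'.restrict (gridCell δ z))
    with hB0
  have hA1u : ∀ z, A1 z Set.univ = a z := fun z => by
    show embS true (σ.restrict (gridCell δ z)) Set.univ = σ (gridCell δ z)
    rw [embS_univ, Measure.restrict_apply_univ]
  have hA0u : ∀ z, A0 z Set.univ = b z := fun z => by
    show embS false (τ.restrict (gridCell δ z)) Set.univ = τ (gridCell δ z)
    rw [embS_univ, Measure.restrict_apply_univ]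
  have hB1u : ∀ z, B1 z Set.univ = a' z := fun z => by
    show embS true (σ'.restrict (gridCell δ z)) Set.univ = σ' (gridCell δ z)
    rw [embS_univ, Measure.restrict_apply_univ]
  have hB0u : ∀ z, B0 z Set.univ = b' z := fun z => by
    show embS false (τ'.restrict (gridCell δ z)) Set.univ = τ' (gridCell δ z)
    rw [embS_univ, Measure.restrict_apply_univ]
  have hA1zero : ∀ z, a z = 0 → A1 z = 0 := fun z hz => by
    show embS true (σ.restrict (gridCell δ z)) = 0
    rw [Measure.restrict_eq_zero.2 hz, embS_zero]
  have hA0zero : ∀ z, b z = 0 → A0 z = 0 := fun z hz => by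
    show embS false (τ.restrict (gridCell δ z)) = 0
    rw [Measure.restrict_eq_zero.2 hz, embS_zero]
  have hB1zero : ∀ z, a' z = 0 → B1 z = 0 := fun z hz => by
    show embS true (σ'.restrict (gridCell δ z)) = 0
    rw [Measure.restrict_eq_zero.2 hz, embS_zero]
  have hB0zero : ∀ z, b' z = 0 → B0 z = 0 := fun z hz => by
    show embS false (τ'.restrict (gridCell δ z)) = 0
    rw [Measure.restrict_eq_zero.2 hz, embS_zero]
  -- the cellwise coupling
  set Pi : (Fin d → ℤ) → Measure (Sd d × Sd d) := fun z =>
    (l z / (a z * a' z)) • ((A1 z).prod (B1 z))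
      + ((a z - l z) / (a z * b' z)) • ((A1 z).prod (B0 z))
      + ((a' z - l z) / (b z * a' z)) • ((A0 z).prod (B1 z))
      + (k z / (b z * b' z)) • ((A0 z).prod (B0 z)) with hPi
  set π : Measure (Sd d × Sd d) := Measure.sum Pi with hπ
  have hPiz : ∀ z, Pi z =
      (l z / (a z * a' z)) • ((A1 z).prod (B1 z))
        + ((a z - l z) / (a z * b' z)) • ((A1 z).prod (B0 z))
        + ((a' z - l z) / (b z * a' z)) • ((A0 z).prod (B1 z))
        + (k z / (b z * b' z)) • ((A0 z).prod (B0 z)) := fun z => rfl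
  -- first marginal
  have hmapfst : ∀ z, (Pi z).map Prod.fst = A1 z + A0 z := by
    intro z
    rw [hPiz z, Measure.map_add _ _ measurable_fst, Measure.map_add _ _ measurable_fst,
      Measure.map_add _ _ measurable_fst, Measure.map_smul, Measure.map_smul,
      Measure.map_smul, Measure.map_smul, Measure.map_fst_prod, Measure.map_fst_prod,
      Measure.map_fst_prod, Measure.map_fst_prod, hB1u, hB0u, smul_smul, smul_smul,
      smul_smul, smul_smul, add_assoc, ← add_smul, ← add_smul]
    have hA1' : (l z / (a z * a' z) * a' z + (a z - l z) / (a z * b' z) * b' z) • A1 z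
        = A1 z := by
      rcases eq_or_ne (a z) 0 with hz | hz
      · rw [hA1zero z hz, smul_zero]
      · have h01 : a' z = 0 → l z = 0 := fun h =>
          le_zero_iff.1 (h ▸ min_le_right (a z) (a' z))
        have h02 : b' z = 0 → a z - l z = 0 := by
          intro h
          have hle : a z ≤ a' z := by
            have h3 := hab z
            rw [h, add_zero] at h3
            calc a z ≤ a z + b z := le_add_right le_rfl
              _ = a' z := h3
          have hlz : l z = a z := min_eq_left hle
          rw [hlz, tsub_self]
        rw [ennreal_scalar_sum (haf z) hz (haf' z) (hbf' z) h01 h02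
          (add_tsub_cancel_of_le (min_le_left _ _)), one_smul]
    have hA0' : ((a' z - l z) / (b z * a' z) * a' z + k z / (b z * b' z) * b' z) • A0 z
        = A0 z := by
      rcases eq_or_ne (b z) 0 with hz | hz
      · rw [hA0zero z hz, smul_zero]
      · have h01 : a' z = 0 → a' z - l z = 0 := fun h => by rw [h, zero_tsub]
        have h02 : b' z = 0 → k z = 0 := fun h =>
          le_zero_iff.1 (h ▸ min_le_right (b z) (b' z))
        rw [ennreal_scalar_sum (hbf z) hz (haf' z) (hbf' z) h01 h02 (hsum1 z), one_smul]
    rw [hA1', hA0']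
  -- second marginal
  have hmapsnd : ∀ z, (Pi z).map Prod.snd = B1 z + B0 z := by
    intro z
    rw [hPiz z, Measure.map_add _ _ measurable_snd, Measure.map_add _ _ measurable_snd,
      Measure.map_add _ _ measurable_snd, Measure.map_smul, Measure.map_smul,
      Measure.map_smul, Measure.map_smul, Measure.map_snd_prod, Measure.map_snd_prod,
      Measure.map_snd_prod, Measure.map_snd_prod, hA1u, hA0u, smul_smul, smul_smul,
      smul_smul, smul_smul]
    have hgroup : ∀ X1 X2 X3 X4 : Measure (Sd d),
        X1 + X2 + X3 + X4 = (X1 + X3) + (X2 + X4) := by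
      intro X1 X2 X3 X4; abel
    rw [hgroup, ← add_smul, ← add_smul]
    have hB1' : (l z / (a z * a' z) * a z + (a' z - l z) / (b z * a' z) * b z) • B1 z
        = B1 z := by
      rcases eq_or_ne (a' z) 0 with hz | hz
      · rw [hB1zero z hz, smul_zero]
      · have h01 : a z = 0 → l z = 0 := fun h =>
          le_zero_iff.1 (h ▸ min_le_left (a z) (a' z))
        have h02 : b z = 0 → a' z - l z = 0 := by
          intro h
          have hle : a' z ≤ a z := by
            have h3 := hab z
            rw [h, add_zero] at h3
            calc a' z ≤ a' z + b' z := le_add_right le_rfl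
              _ = a z := h3.symm
          have hlz : l z = a' z := min_eq_right hle
          rw [hlz, tsub_self]
        rw [mul_comm (a z) (a' z), mul_comm (b z) (a' z),
          ennreal_scalar_sum (haf' z) hz (haf z) (hbf z) h01 h02
          (add_tsub_cancel_of_le (min_le_right _ _)), one_smul]
    have hB0' : ((a z - l z) / (a z * b' z) * a z + k z / (b z * b' z) * b z) • B0 z
        = B0 z := by
      rcases eq_or_ne (b' z) 0 with hz | hz
      · rw [hB0zero z hz, smul_zero]
      · have h01 : a z = 0 → a z - l z = 0 := fun h => by rw [h, zero_tsub]
        have h02 : b z = 0 → k z = 0 := fun h =>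
          le_zero_iff.1 (h ▸ min_le_left (b z) (b' z))
        rw [mul_comm (a z) (b' z), mul_comm (b z) (b' z),
          ennreal_scalar_sum (hbf' z) hz (haf z) (hbf z) h01 h02 (hsum2 z), one_smul]
    rw [hB1', hB0']
  have hsumA1 : Measure.sum (fun z => A1 z) = embS true σ := by
    have h1 := Measure.map_sum (m := fun z => σ.restrict (gridCell δ z))
      (f := fun x : Rd d => (x, true)) (measurable_pair true).aemeasurable
    rw [sum_restrict_gridCell] at h1
    exact h1.symm
  have hsumA0 : Measure.sum (fun z => A0 z) = embS false τ := by
    have h1 := Measure.map_sum (m := fun z => τ.restrict (gridCell δ z))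
      (f := fun x : Rd d => (x, false)) (measurable_pair false).aemeasurable
    rw [sum_restrict_gridCell] at h1
    exact h1.symm
  have hsumB1 : Measure.sum (fun z => B1 z) = embS true σ' := by
    have h1 := Measure.map_sum (m := fun z => σ'.restrict (gridCell δ z))
      (f := fun x : Rd d => (x, true)) (measurable_pair true).aemeasurable
    rw [sum_restrict_gridCell] at h1
    exact h1.symm
  have hsumB0 : Measure.sum (fun z => B0 z) = embS false τ' := by
    have h1 := Measure.map_sum (m := fun z => τ'.restrict (gridCell δ z))
      (f := fun x : Rd d => (x, false)) (measurable_pair false).aemeasurable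
    rw [sum_restrict_gridCell] at h1
    exact h1.symm
  have hπfst : π.map Prod.fst = embS true σ + embS false τ := by
    rw [hπ, Measure.map_sum measurable_fst.aemeasurable]
    simp_rw [hmapfst]
    rw [measure_sum_add, hsumA1, hsumA0]
  have hπsnd : π.map Prod.snd = embS true σ' + embS false τ' := by
    rw [hπ, Measure.map_sum measurable_snd.aemeasurable]
    simp_rw [hmapsnd]
    rw [measure_sum_add, hsumB1, hsumB0]
  have hπprob : IsProbabilityMeasure π := by
    constructor
    have h1 : π Set.univ = (π.map Prod.fst) Set.univ := by
      rw [Measure.map_apply measurable_fst MeasurableSet.univ, Set.preimage_univ]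
    rw [h1, hπfst]
    exact hprob.measure_univ
  -- cost estimate
  have hcost_z : ∀ z, ∫⁻ pq, ENNReal.ofReal (dS pq.1 pq.2 ^ 2) ∂(Pi z)
      ≤ ENNReal.ofReal (δ ^ 2) * (l z + k z)
        + ENNReal.ofReal ((δ + 1) ^ 2) * ((a z - l z) + (a' z - l z)) := by
    intro z
    rw [hPiz z, lintegral_add_measure, lintegral_add_measure, lintegral_add_measure,
      lintegral_smul_measure, lintegral_smul_measure, lintegral_smul_measure,
      lintegral_smul_measure]
    have hbound11 : ∀ x ∈ gridCell δ z, ∀ y ∈ gridCell δ z,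
        dS ((x : Rd d), true) (y, true) ^ 2 ≤ δ ^ 2 := by
      intro x hx y hy
      have hdd : dS (x, true) (y, true) = ‖x - y‖ := by simp [dS, bToR]
      rw [hdd]
      exact pow_le_pow_left₀ (norm_nonneg _) (norm_sub_le_of_mem_gridCell hδ0 hx hy) 2
    have hbound00 : ∀ x ∈ gridCell δ z, ∀ y ∈ gridCell δ z,
        dS ((x : Rd d), false) (y, false) ^ 2 ≤ δ ^ 2 := by
      intro x hx y hy
      have hdd : dS (x, false) (y, false) = ‖x - y‖ := by simp [dS, bToR]
      rw [hdd]
      exact pow_le_pow_left₀ (norm_nonneg _) (norm_sub_le_of_mem_gridCell hδ0 hx hy) 2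
    have hbound10 : ∀ x ∈ gridCell δ z, ∀ y ∈ gridCell δ z,
        dS ((x : Rd d), true) (y, false) ^ 2 ≤ (δ + 1) ^ 2 := by
      intro x hx y hy
      have hdd : dS (x, true) (y, false) = ‖x - y‖ + 1 := by simp [dS, bToR]
      rw [hdd]
      refine pow_le_pow_left₀ (by positivity) ?_ 2
      have := norm_sub_le_of_mem_gridCell hδ0 hx hy
      linarith
    have hbound01 : ∀ x ∈ gridCell δ z, ∀ y ∈ gridCell δ z,
        dS ((x : Rd d), false) (y, true) ^ 2 ≤ (δ + 1) ^ 2 := by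
      intro x hx y hy
      have hdd : dS (x, false) (y, true) = ‖x - y‖ + 1 := by simp [dS, bToR]
      rw [hdd]
      refine pow_le_pow_left₀ (by positivity) ?_ 2
      have := norm_sub_le_of_mem_gridCell hδ0 hx hy
      linarith
    have h11 := lintegral_prod_emb_le z σ σ' true true hbound11
    have h10 := lintegral_prod_emb_le z σ τ' true false hbound10
    have h01 := lintegral_prod_emb_le z τ σ' false true hbound01
    have h00 := lintegral_prod_emb_le z τ τ' false false hbound00
    have step1 : l z / (a z * a' z) * ∫⁻ pq, ENNReal.ofReal (dS pq.1 pq.2 ^ 2) ∂((A1 z).prod (B1 z))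
          + (a z - l z) / (a z * b' z) * ∫⁻ pq, ENNReal.ofReal (dS pq.1 pq.2 ^ 2) ∂((A1 z).prod (B0 z))
          + (a' z - l z) / (b z * a' z) * ∫⁻ pq, ENNReal.ofReal (dS pq.1 pq.2 ^ 2) ∂((A0 z).prod (B1 z))
          + k z / (b z * b' z) * ∫⁻ pq, ENNReal.ofReal (dS pq.1 pq.2 ^ 2) ∂((A0 z).prod (B0 z))
        ≤ l z / (a z * a' z) * (ENNReal.ofReal (δ ^ 2) * (a z * a' z))
          + (a z - l z) / (a z * b' z) * (ENNReal.ofReal ((δ + 1) ^ 2) * (a z * b' z))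
          + (a' z - l z) / (b z * a' z) * (ENNReal.ofReal ((δ + 1) ^ 2) * (b z * a' z))
          + k z / (b z * b' z) * (ENNReal.ofReal (δ ^ 2) * (b z * b' z)) :=
      add_le_add (add_le_add (add_le_add (mul_le_mul_right h11 _) (mul_le_mul_right h10 _))
        (mul_le_mul_right h01 _)) (mul_le_mul_right h00 _)
    refine step1.trans ?_
    rw [mul_left_comm (l z / (a z * a' z)), mul_left_comm ((a z - l z) / (a z * b' z)),
      mul_left_comm ((a' z - l z) / (b z * a' z)), mul_left_comm (k z / (b z * b' z)),
      mul_add, mul_add]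
    have step2 : ENNReal.ofReal (δ ^ 2) * (l z / (a z * a' z) * (a z * a' z))
          + ENNReal.ofReal ((δ + 1) ^ 2) * ((a z - l z) / (a z * b' z) * (a z * b' z))
          + ENNReal.ofReal ((δ + 1) ^ 2) * ((a' z - l z) / (b z * a' z) * (b z * a' z))
          + ENNReal.ofReal (δ ^ 2) * (k z / (b z * b' z) * (b z * b' z))
        ≤ ENNReal.ofReal (δ ^ 2) * l z + ENNReal.ofReal ((δ + 1) ^ 2) * (a z - l z)
          + ENNReal.ofReal ((δ + 1) ^ 2) * (a' z - l z) + ENNReal.ofReal (δ ^ 2) * k z :=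
      add_le_add (add_le_add (add_le_add (mul_le_mul_right ennreal_div_mul_le _)
        (mul_le_mul_right ennreal_div_mul_le _)) (mul_le_mul_right ennreal_div_mul_le _))
        (mul_le_mul_right ennreal_div_mul_le _)
    refine step2.trans (le_of_eq ?_)
    abel
  have hmass : (∑' z, (l z + k z)) ≤ 1 := by
    have h1 : (∑' z, (l z + k z)) ≤ ∑' z, (a z + b z) :=
      ENNReal.tsum_le_tsum fun z => add_le_add (min_le_left _ _) (min_le_left _ _)
    have h2 : (∑' z, (a z + b z)) = σ Set.univ + τ Set.univ := by
      rw [ENNReal.tsum_add]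
      congr 1
      · exact tsum_gridCell δ σ
      · exact tsum_gridCell δ τ
    have h3 : σ Set.univ + τ Set.univ = 1 := by
      have h4 := hprob.measure_univ
      rw [Measure.add_apply, embS_univ, embS_univ] at h4
      exact h4
    rw [h2, h3] at h1
    exact h1
  have hcostπ : ∫⁻ pq, ENNReal.ofReal (dS pq.1 pq.2 ^ 2) ∂π
      ≤ ENNReal.ofReal (δ ^ 2 + 4 * η) := by
    rw [hπ, lintegral_sum_measure]
    have c1 : (∑' z, ∫⁻ pq, ENNReal.ofReal (dS pq.1 pq.2 ^ 2) ∂(Pi z))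
        ≤ ∑' z, (ENNReal.ofReal (δ ^ 2) * (l z + k z)
            + ENNReal.ofReal ((δ + 1) ^ 2) * ((a z - l z) + (a' z - l z))) :=
      ENNReal.tsum_le_tsum hcost_z
    refine c1.trans ?_
    rw [ENNReal.tsum_add, ENNReal.tsum_mul_left, ENNReal.tsum_mul_left]
    have c2 : ENNReal.ofReal (δ ^ 2) * (∑' z, (l z + k z)) ≤ ENNReal.ofReal (δ ^ 2) * 1 :=
      mul_le_mul_right hmass _
    have c3 : ENNReal.ofReal ((δ + 1) ^ 2) * (∑' z, ((a z - l z) + (a' z - l z)))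
        ≤ ENNReal.ofReal 4 * ENNReal.ofReal η := by
      refine mul_le_mul' (ENNReal.ofReal_le_ofReal (by nlinarith)) hD
    refine (add_le_add c2 c3).trans (le_of_eq ?_)
    rw [mul_one, ← ENNReal.ofReal_mul (by norm_num : (0:ℝ) ≤ 4),
      ← ENNReal.ofReal_add (by positivity) (by positivity)]
  -- conclusion
  have hW : W2S (embS true σ + embS false τ) (embS true σ' + embS false τ')
      ≤ Real.sqrt (∫ pq, dS pq.1 pq.2 ^ 2 ∂π) := by
    unfold W2S W2
    refine csInf_le ⟨0, ?_⟩ ?_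
    · rintro r ⟨π', -, -, -, hr⟩
      rw [hr]; exact Real.sqrt_nonneg _
    · exact ⟨π, hπprob, hπfst, hπsnd, rfl⟩
  refine hW.trans (Real.sqrt_le_sqrt ?_)
  rw [integral_eq_lintegral_of_nonneg_ae
    (Filter.Eventually.of_forall (fun pq => sq_nonneg _))
    (measurable_dS.pow_const 2).aestronglyMeasurable]
  exact ENNReal.toReal_le_of_le_ofReal (by positivity) hcostπ


lemma exists_ultrafilter_limit (𝒰 : Ultrafilter ℕ) (x : ℕ → ℝ)
    (h : ∀ n, x n ∈ Set.Icc (0:ℝ) 1) :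
    ∃ L ∈ Set.Icc (0:ℝ) 1, Tendsto x 𝒰 (nhds L) := by
  have hle : ↑(𝒰.map x) ≤ Filter.principal (Set.Icc (0:ℝ) 1) := by
    rw [le_principal_iff]
    refine Filter.mem_map.2 ?_
    have : x ⁻¹' Set.Icc (0:ℝ) 1 = Set.univ := Set.eq_univ_of_forall h
    rw [this]; exact Filter.univ_mem
  obtain ⟨L, hL, hle2⟩ := isCompact_Icc.ultrafilter_le_nhds (𝒰.map x) hle
  exact ⟨L, hL, hle2⟩

lemma infinite_of_mem_ultrafilter (𝒰 : Ultrafilter ℕ) (h𝒰 : ↑𝒰 ≤ (atTop : Filter ℕ))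
    {S : Set ℕ} (hS : S ∈ 𝒰) : S.Infinite := by
  intro hfin
  obtain ⟨N, hN⟩ := hfin.bddAbove
  have hc : Sᶜ ∈ 𝒰 := by
    refine h𝒰 ?_
    refine Filter.mem_atTop_sets.2 ⟨N + 1, fun n hn hns => ?_⟩
    exact absurd (hN hns) (by omega)
  have : (S ∩ Sᶜ) ∈ 𝒰 := Filter.inter_mem hS hc
  rw [Set.inter_compl_self] at this
  exact Filter.empty_notMem (𝒰 : Filter ℕ) this

lemma exists_subseq_tendsto (𝒰 : Ultrafilter ℕ) (h𝒰 : ↑𝒰 ≤ (atTop : Filter ℕ))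
    {ι : Type*} [Countable ι] (x : ι → ℕ → ℝ) (L : ι → ℝ)
    (hx : ∀ i, Tendsto (x i) 𝒰 (nhds (L i))) :
    ∃ φ : ℕ → ℕ, StrictMono φ ∧ ∀ i, Tendsto (fun n => x i (φ n)) atTop (nhds (L i)) := by
  rcases isEmpty_or_nonempty ι with hι | hι
  · exact ⟨id, strictMono_id, fun i => (hι.elim i)⟩
  obtain ⟨e, he⟩ := exists_surjective_nat ι
  set S : ℕ → Set ℕ := fun j => {n | ∀ k ≤ j, |x (e k) n - L (e k)| < 1 / (j + 1)} with hSdef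
  have hS : ∀ j, S j ∈ 𝒰 := by
    intro j
    have h1 : ∀ k, ∀ᶠ n in (𝒰 : Filter ℕ), |x (e k) n - L (e k)| < 1 / (j + 1) := by
      intro k
      have hpos : (0:ℝ) < 1 / (j + 1) := by positivity
      have := Metric.tendsto_nhds.1 (hx (e k)) _ hpos
      simpa [Real.dist_eq] using this
    have h2 : ∀ᶠ n in (𝒰 : Filter ℕ), ∀ k ∈ Finset.range (j + 1),
        |x (e k) n - L (e k)| < 1 / (j + 1) :=
      (Filter.eventually_all_finset _).2 fun k _ => h1 k
    refine Filter.mem_of_superset h2 fun n hn k hk => ?_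
    exact hn k (Finset.mem_range.2 (by omega))
  have hSinf : ∀ j, (S j).Infinite := fun j => infinite_of_mem_ultrafilter 𝒰 h𝒰 (hS j)
  have hchoice : ∀ j N, ∃ b ∈ S j, N < b := fun j N => (hSinf j).exists_gt N
  choose g hg1 hg2 using hchoice
  set φ : ℕ → ℕ := fun j => Nat.rec (g 0 0) (fun j ih => g (j + 1) ih) j with hφdef
  have hφmem : ∀ j, φ j ∈ S j := by
    intro j
    cases j with
    | zero => exact hg1 0 0
    | succ j => exact hg1 (j + 1) _
  have hφmono : StrictMono φ := by
    refine strictMono_nat_of_lt_succ fun j => ?_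
    exact hg2 (j + 1) (φ j)
  refine ⟨φ, hφmono, fun i => ?_⟩
  obtain ⟨k, rfl⟩ := he i
  rw [Metric.tendsto_atTop]
  intro ε hε
  obtain ⟨J, hJ⟩ := exists_nat_gt (1 / ε)
  refine ⟨max k J, fun j hj => ?_⟩
  have hkj : k ≤ j := le_trans (le_max_left _ _) hj
  have hJj : J ≤ j := le_trans (le_max_right _ _) hj
  have h3 := hφmem j k hkj
  rw [Real.dist_eq]
  refine h3.trans_le ?_
  rw [div_le_iff₀ (by positivity)]
  rw [div_lt_iff₀ hε] at hJ
  have hcast : (J : ℝ) ≤ j := Nat.cast_le.2 hJj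
  nlinarith [hε.le]

/-- construction of a measure from a dominated, nonnegative, finitely additive
set function -/
lemma exists_limit_measure {α : Type*} [MeasurableSpace α] (μ₁ : Measure α)
    [IsFiniteMeasure μ₁] (F : Set α → ℝ)
    (hFnn : ∀ s, 0 ≤ F s)
    (hFle : ∀ s, ENNReal.ofReal (F s) ≤ μ₁ s)
    (hFadd : ∀ s t, MeasurableSet s → MeasurableSet t → Disjoint s t →
      F (s ∪ t) = F s + F t) :
    ∃ σ : Measure α, σ ≤ μ₁ ∧ ∀ s, MeasurableSet s → σ s = ENNReal.ofReal (F s) := by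
  have hF0 : F ∅ = 0 := by
    have := hFadd ∅ ∅ MeasurableSet.empty MeasurableSet.empty (by simp)
    simp only [Set.union_empty] at this
    linarith
  have hmadd : ∀ f : ℕ → Set α, (∀ i, MeasurableSet (f i)) →
      Pairwise (Function.onFun Disjoint f) →
      ENNReal.ofReal (F (⋃ i, f i)) = ∑' i, ENNReal.ofReal (F (f i)) := by
    intro f hfm hfd
    set g : ℕ → ℝ := fun K => F (⋃ i, f (i + K)) with hg
    have htail_eq : ∀ K, (⋃ i, f (i + K)) = f K ∪ ⋃ i, f (i + (K + 1)) := by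
      intro K
      ext y
      simp only [Set.mem_iUnion, Set.mem_union]
      constructor
      · rintro ⟨i, hi⟩
        cases i with
        | zero => left; simpa using hi
        | succ i => right; exact ⟨i, by rwa [show i + (K + 1) = i + 1 + K by omega]⟩
      · rintro (h | ⟨i, hi⟩)
        · exact ⟨0, by simpa using h⟩
        · exact ⟨i + 1, by rwa [show i + 1 + K = i + (K + 1) by omega]⟩
    have hstep : ∀ K, g K = F (f K) + g (K + 1) := by
      intro K
      rw [hg]
      simp only
      rw [htail_eq K]
      exact hFadd _ _ (hfm K) (MeasurableSet.iUnion fun i => hfm _)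
        (Set.disjoint_iUnion_right.2 fun i => hfd (by omega))
    have hpartial : ∀ K, F (⋃ i, f i) = (∑ i ∈ Finset.range K, F (f i)) + g K := by
      intro K
      induction K with
      | zero => simp [hg]
      | succ K ih => rw [Finset.sum_range_succ, ih, hstep K]; ring
    have hSfin : (∑' i, μ₁ (f i)) ≠ ∞ := by
      rw [← measure_iUnion hfd hfm]
      exact measure_ne_top _ _
    have hgK : Tendsto g atTop (nhds 0) := by
      have h1 : Tendsto (fun K => ∑' i, μ₁ (f (i + K))) atTop (nhds 0) :=
        ENNReal.tendsto_sum_nat_add _ hSfin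
      have h2 : Tendsto (fun K => (∑' i, μ₁ (f (i + K))).toReal) atTop (nhds 0) := by
        have := (ENNReal.tendsto_toReal (a := 0) (by simp)).comp h1
        exact this
      refine squeeze_zero (fun K => hFnn _) (fun K => ?_) h2
      have h3 : ENNReal.ofReal (g K) ≤ ∑' i, μ₁ (f (i + K)) := by
        refine (hFle _).trans ?_
        exact measure_iUnion_le _
      have h4 : (∑' i, μ₁ (f (i + K))) ≠ ∞ := by
        have h5 := measure_iUnion (μ := μ₁) (f := fun i => f (i + K))
          (fun i j hij => hfd (show i + K ≠ j + K by omega)) (fun i => hfm _)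
        rw [← h5]
        exact measure_ne_top _ _
      have := ENNReal.toReal_mono h4 h3
      rwa [ENNReal.toReal_ofReal (hFnn _)] at this
    have htendsto : Tendsto (fun K => ∑ i ∈ Finset.range K, F (f i)) atTop
        (nhds (F (⋃ i, f i))) := by
      have h1 : (fun K => ∑ i ∈ Finset.range K, F (f i))
          = fun K => F (⋃ i, f i) - g K := by
        funext K
        have := hpartial K
        linarith
      rw [h1]
      simpa using tendsto_const_nhds.sub hgK
    have hhs : HasSum (fun i => F (f i)) (F (⋃ i, f i)) :=
      (hasSum_iff_tendsto_nat_of_nonneg (fun i => hFnn _) _).2 htendsto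
    rw [← hhs.tsum_eq]
    exact ENNReal.ofReal_tsum_of_nonneg (fun i => hFnn _) hhs.summable
  set σ : Measure α := Measure.ofMeasurable (fun s _ => ENNReal.ofReal (F s))
    (by simpa using congrArg ENNReal.ofReal hF0)
    (fun f hfm hfd => hmadd f hfm hfd) with hσ
  have happly : ∀ s, MeasurableSet s → σ s = ENNReal.ofReal (F s) := by
    intro s hs
    rw [hσ]
    exact Measure.ofMeasurable_apply s hs
  refine ⟨σ, ?_, happly⟩
  refine Measure.le_iff.2 fun s hs => ?_
  rw [happly s hs]
  exact hFle s


lemma ennreal_err (A B : ℝ≥0∞) (hA : A ≠ ∞) (hB : B ≠ ∞) :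
    (A - min A B) + (B - min A B) = ENNReal.ofReal |A.toReal - B.toReal| := by
  rcases le_total A B with h | h
  · rw [min_eq_left h, tsub_self, zero_add,
      abs_of_nonpos (sub_nonpos.2 (ENNReal.toReal_mono hB h)), neg_sub,
      ENNReal.ofReal_sub _ ENNReal.toReal_nonneg, ENNReal.ofReal_toReal hA,
      ENNReal.ofReal_toReal hB]
  · rw [min_eq_right h, tsub_self, add_zero,
      abs_of_nonneg (sub_nonneg.2 (ENNReal.toReal_mono hA h)),
      ENNReal.ofReal_sub _ ENNReal.toReal_nonneg, ENNReal.ofReal_toReal hA,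
      ENNReal.ofReal_toReal hB]

lemma withDensity_prob_split {α : Type*} [MeasurableSpace α] (μ : Measure α)
    (p : α → ℝ) (hp : Measurable p) (h01 : ∀ x, p x ∈ Set.Icc (0:ℝ) 1) :
    μ.withDensity (fun x => ENNReal.ofReal (p x))
      + μ.withDensity (fun x => ENNReal.ofReal (1 - p x)) = μ := by
  rw [← withDensity_add_left hp.ennreal_ofReal]
  have h1 : ((fun x => ENNReal.ofReal (p x)) + fun x => ENNReal.ofReal (1 - p x))
      = fun _ => (1 : ℝ≥0∞) := by
    funext x
    rw [Pi.add_apply, ← ENNReal.ofReal_add (h01 x).1 (by linarith [(h01 x).2])]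
    norm_num
  rw [h1]
  have h2 : (fun _ : α => (1:ℝ≥0∞)) = 1 := rfl
  rw [h2, withDensity_one]

end CompactAux








/-- **Compactness of the set of stopping successors** (Remark 4.1): for every
`m ∈ P₂(S)`, the set `{m' : m' ⪯ m}` is (sequentially) compact in `(P₂(S), W₂)`. -/
theorem stopOrder_set_compact
    (d : ℕ) (m : Measure (Sd d)) (hm : MemP2S m) :
    ∀ μ : ℕ → Measure (Sd d), (∀ n, MemP2S (μ n) ∧ StopOrder (μ n) m) →
      ∃ φ : ℕ → ℕ, StrictMono φ ∧ ∃ ν, MemP2S ν ∧ StopOrder ν m ∧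
        Tendsto (fun n => W2S (μ (φ n)) ν) atTop (nhds 0) := by
  classical
  intro μ h
  obtain ⟨hmprob, hmint⟩ := hm
  set μ1 : Measure (Rd d) := slice m true with hμ1
  set μ0 : Measure (Rd d) := slice m false with hμ0
  have hm_dec : m = embS true μ1 + embS false μ0 := decomp_slices m
  have hm_fst : m.map Prod.fst = μ1 + μ0 := by
    conv_lhs => rw [hm_dec]
    rw [Measure.map_add _ _ measurable_fst, map_fst_embS, map_fst_embS]
  have hρuniv : (μ1 + μ0) Set.univ = 1 := by
    rw [← hm_fst, Measure.map_apply measurable_fst MeasurableSet.univ, Set.preimage_univ]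
    exact measure_univ
  haveI hμ1fin : IsFiniteMeasure μ1 := by
    constructor
    have h1 : μ1 Set.univ ≤ (μ1 + μ0) Set.univ := by
      rw [Measure.add_apply]; exact le_add_right le_rfl
    rw [hρuniv] at h1
    exact lt_of_le_of_lt h1 ENNReal.one_lt_top
  haveI hμ0fin : IsFiniteMeasure μ0 := by
    constructor
    have h1 : μ0 Set.univ ≤ (μ1 + μ0) Set.univ := by
      rw [Measure.add_apply]; exact le_add_self
    rw [hρuniv] at h1
    exact lt_of_le_of_lt h1 ENNReal.one_lt_top
  have hm1univ : μ1 Set.univ ≤ 1 := by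
    rw [← hρuniv, Measure.add_apply]
    exact le_add_right le_rfl
  -- densities of the competitors
  have hp : ∀ n, ∃ p : Rd d → ℝ, Measurable p ∧ (∀ x, p x ∈ Icc (0:ℝ) 1) ∧
      slice (μ n) true = μ1.withDensity (fun x => ENNReal.ofReal (p x)) ∧
      slice (μ n) false = μ1.withDensity (fun x => ENNReal.ofReal (1 - p x)) + μ0 :=
    fun n => (h n).2
  choose p hpmeas hp01 hslice1 hslice0 using hp
  set σn : ℕ → Measure (Rd d) := fun n => slice (μ n) true with hσn
  set τn : ℕ → Measure (Rd d) := fun n => slice (μ n) false with hτn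
  have hσle : ∀ n, σn n ≤ μ1 := by
    intro n
    calc σn n = μ1.withDensity (fun x => ENNReal.ofReal (p n x)) := hslice1 n
      _ ≤ μ1.withDensity (fun _ => 1) := withDensity_mono
          (Filter.Eventually.of_forall fun x => ENNReal.ofReal_le_one.2 (hp01 n x).2)
      _ = μ1 := by
          have h2 : (fun _ : Rd d => (1:ℝ≥0∞)) = 1 := rfl
          rw [h2, withDensity_one]
  haveI hfinσn : ∀ n, IsFiniteMeasure (σn n) := fun n => isFiniteMeasure_of_le μ1 (hσle n)
  have hρn : ∀ n, σn n + τn n = μ1 + μ0 := by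
    intro n
    calc σn n + τn n
        = μ1.withDensity (fun x => ENNReal.ofReal (p n x))
          + (μ1.withDensity (fun x => ENNReal.ofReal (1 - p n x)) + μ0) := by
          rw [← hslice1 n, ← hslice0 n]
      _ = (μ1.withDensity (fun x => ENNReal.ofReal (p n x))
          + μ1.withDensity (fun x => ENNReal.ofReal (1 - p n x))) + μ0 := by
          rw [add_assoc]
      _ = μ1 + μ0 := by rw [withDensity_prob_split μ1 (p n) (hpmeas n) (hp01 n)]
  haveI hfinτn : ∀ n, IsFiniteMeasure (τn n) := by
    intro n
    constructor
    have h1 := congrArg (fun ξ : Measure (Rd d) => ξ Set.univ) (hρn n)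
    simp only [Measure.add_apply] at h1
    calc τn n Set.univ ≤ σn n Set.univ + τn n Set.univ := le_add_self
      _ = μ1 Set.univ + μ0 Set.univ := h1
      _ < ⊤ := by
          exact ENNReal.add_lt_top.2 ⟨measure_lt_top _ _, measure_lt_top _ _⟩
  have hdec : ∀ n, μ n = embS true (σn n) + embS false (τn n) := fun n => decomp_slices (μ n)
  have hprobn : ∀ n, IsProbabilityMeasure (embS true (σn n) + embS false (τn n)) := by
    intro n
    rw [← hdec n]
    exact (h n).1.1
  -- ultrafilter limits of the surviving masses
  set 𝒰 : Ultrafilter ℕ := Ultrafilter.of atTop with h𝒰def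
  have h𝒰 : ↑𝒰 ≤ (atTop : Filter ℕ) := Ultrafilter.of_le _
  have hxIcc : ∀ s : Set (Rd d), ∀ n, (σn n s).toReal ∈ Icc (0:ℝ) 1 := by
    intro s n
    refine ⟨ENNReal.toReal_nonneg, ?_⟩
    have h1 : σn n s ≤ 1 := le_trans (Measure.le_iff'.1 (hσle n) s)
      (le_trans (measure_mono (Set.subset_univ _)) hm1univ)
    refine ENNReal.toReal_le_of_le_ofReal zero_le_one ?_
    rwa [ENNReal.ofReal_one]
  have hlim : ∀ s : Set (Rd d), ∃ L ∈ Icc (0:ℝ) 1,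
      Tendsto (fun n => (σn n s).toReal) 𝒰 (nhds L) := fun s =>
    exists_ultrafilter_limit 𝒰 _ (fun n => hxIcc s n)
  choose Lf hLIcc hLtend using hlim
  have hLnn : ∀ s, 0 ≤ Lf s := fun s => (hLIcc s).1
  have hLle : ∀ s, ENNReal.ofReal (Lf s) ≤ μ1 s := by
    intro s
    have h1 : ∀ n, (σn n s).toReal ≤ (μ1 s).toReal := fun n =>
      ENNReal.toReal_mono (measure_ne_top μ1 s) (Measure.le_iff'.1 (hσle n) s)
    have h2 : Lf s ≤ (μ1 s).toReal :=
      le_of_tendsto (hLtend s) (Filter.Eventually.of_forall h1)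
    calc ENNReal.ofReal (Lf s) ≤ ENNReal.ofReal ((μ1 s).toReal) :=
        ENNReal.ofReal_le_ofReal h2
      _ = μ1 s := ENNReal.ofReal_toReal (measure_ne_top μ1 s)
  have hLadd : ∀ s t, MeasurableSet s → MeasurableSet t → Disjoint s t →
      Lf (s ∪ t) = Lf s + Lf t := by
    intro s t hs ht hst
    have h1 : ∀ n, ((σn n) (s ∪ t)).toReal = (σn n s).toReal + (σn n t).toReal := by
      intro n
      rw [measure_union hst ht,
        ENNReal.toReal_add (measure_ne_top _ _) (measure_ne_top _ _)]
    refine tendsto_nhds_unique (hLtend (s ∪ t)) ?_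
    exact ((hLtend s).add (hLtend t)).congr fun n => (h1 n).symm
  obtain ⟨σ', hσ'le, hσ'app⟩ := exists_limit_measure μ1 Lf hLnn hLle hLadd
  haveI : IsFiniteMeasure σ' := isFiniteMeasure_of_le μ1 hσ'le
  -- the limit density
  have hac : σ' ≪ μ1 := hσ'le.absolutelyContinuous
  haveI : σ'.HaveLebesgueDecomposition μ1 :=
    Measure.haveLebesgueDecomposition_of_sigmaFinite (μ := σ') (ν := μ1)
  have hrn : μ1.withDensity (σ'.rnDeriv μ1) = σ' := Measure.withDensity_rnDeriv_eq σ' μ1 hac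
  have hrn1 : σ'.rnDeriv μ1 ≤ᵐ[μ1] 1 := Measure.rnDeriv_le_one_of_le hσ'le
  set q : Rd d → ℝ := fun x => min ((σ'.rnDeriv μ1 x).toReal) 1 with hq
  have hqmeas : Measurable q :=
    (Measure.measurable_rnDeriv σ' μ1).ennreal_toReal.min measurable_const
  have hq01 : ∀ x, q x ∈ Icc (0:ℝ) 1 :=
    fun x => ⟨le_min ENNReal.toReal_nonneg zero_le_one, min_le_right _ _⟩
  have hqd : (fun x => ENNReal.ofReal (q x)) =ᵐ[μ1] σ'.rnDeriv μ1 := by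
    filter_upwards [hrn1] with x hx
    have hne : σ'.rnDeriv μ1 x ≠ ∞ := (hx.trans_lt ENNReal.one_lt_top).ne
    have htr : (σ'.rnDeriv μ1 x).toReal ≤ 1 := by
      have := ENNReal.toReal_mono ENNReal.one_ne_top hx
      simpa using this
    show ENNReal.ofReal (min ((σ'.rnDeriv μ1 x).toReal) 1) = σ'.rnDeriv μ1 x
    rw [min_eq_left htr, ENNReal.ofReal_toReal hne]
  have hσ'dens : μ1.withDensity (fun x => ENNReal.ofReal (q x)) = σ' := by
    rw [withDensity_congr_ae hqd, hrn]
  -- the limit candidate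
  set τ' : Measure (Rd d) := μ1.withDensity (fun x => ENNReal.ofReal (1 - q x)) + μ0
    with hτ'
  set ν : Measure (Sd d) := embS true σ' + embS false τ' with hν
  have hρ' : σ' + τ' = μ1 + μ0 := by
    calc σ' + τ'
        = (μ1.withDensity (fun x => ENNReal.ofReal (q x))
          + μ1.withDensity (fun x => ENNReal.ofReal (1 - q x))) + μ0 := by
          rw [← hσ'dens, hτ', add_assoc]
      _ = μ1 + μ0 := by rw [withDensity_prob_split μ1 q hqmeas hq01]
  haveI : IsFiniteMeasure τ' := by
    constructor
    have h1 := congrArg (fun ξ : Measure (Rd d) => ξ Set.univ) hρ'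
    simp only [Measure.add_apply] at h1
    calc τ' Set.univ ≤ σ' Set.univ + τ' Set.univ := le_add_self
      _ = μ1 Set.univ + μ0 Set.univ := h1
      _ < ⊤ := ENNReal.add_lt_top.2 ⟨measure_lt_top _ _, measure_lt_top _ _⟩
  have hslice1ν : slice ν true = σ' := by
    rw [hν, slice_add, slice_embS_same, slice_embS_ne false true (by decide), add_zero]
  have hslice0ν : slice ν false = τ' := by
    rw [hν, slice_add, slice_embS_ne true false (by decide), slice_embS_same, zero_add]
  have hSO : StopOrder ν m := by
    refine ⟨q, hqmeas, hq01, ?_, ?_⟩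
    · rw [hslice1ν, ← hσ'dens]
    · rw [hslice0ν, hτ']
  -- ν is a square integrable probability measure
  have hν_marg : ν.map Prod.fst = m.map Prod.fst := by
    rw [hν, Measure.map_add _ _ measurable_fst, map_fst_embS, map_fst_embS, hρ', hm_fst]
  have hνprob : IsProbabilityMeasure ν := by
    constructor
    have h1 : ν Set.univ = (ν.map Prod.fst) Set.univ := by
      rw [Measure.map_apply measurable_fst MeasurableSet.univ, Set.preimage_univ]
    rw [h1, hν_marg, Measure.map_apply measurable_fst MeasurableSet.univ,
      Set.preimage_univ]
    exact measure_univ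
  haveI := hνprob
  have hνint : Integrable (fun pt : Sd d => ‖pt.1‖ ^ 2) ν := by
    have hg : Measurable fun x : Rd d => ‖x‖ ^ 2 := (measurable_id.norm).pow_const 2
    have h1 : Integrable (fun x : Rd d => ‖x‖ ^ 2) (m.map Prod.fst) := by
      rw [integrable_map_measure hg.aestronglyMeasurable measurable_fst.aemeasurable]
      exact hmint
    have h2 : Integrable (fun x : Rd d => ‖x‖ ^ 2) (ν.map Prod.fst) := by
      rw [hν_marg]; exact h1
    have h3 := (integrable_map_measure hg.aestronglyMeasurable
      measurable_fst.aemeasurable).1 h2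
    exact h3
  -- subsequence extraction along the countable grid family
  set CC : ℕ × (Fin d → ℤ) → Set (Rd d) := fun i => gridCell (1 / ((i.1 : ℝ) + 1)) i.2
    with hCC
  obtain ⟨φ, hφmono, hφconv⟩ := exists_subseq_tendsto 𝒰 h𝒰
    (fun i n => (σn n (CC i)).toReal) (fun i => Lf (CC i))
    (fun i => hLtend (CC i))
  refine ⟨φ, hφmono, ν, ⟨hνprob, hνint⟩, hSO, ?_⟩
  rw [Metric.tendsto_atTop]
  intro ε hε
  -- choice of the mesh
  obtain ⟨j, hj⟩ := exists_nat_gt (2 / ε)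
  set δ : ℝ := 1 / ((j : ℝ) + 1) with hδdef
  have hδ0 : 0 < δ := by positivity
  have hδ1 : δ ≤ 1 := by
    rw [hδdef, div_le_one (by positivity)]
    linarith [Nat.cast_nonneg (α := ℝ) j]
  have hδε : δ ≤ ε / 2 := by
    rw [div_lt_iff₀ hε] at hj
    rw [hδdef, div_le_div_iff₀ (by positivity) (by norm_num : (0:ℝ) < 2)]
    nlinarith [hε.le]
  set η : ℝ := ε ^ 2 / 16 with hηdef
  have hη : 0 ≤ η := by positivity
  -- tail control
  set Z : ℕ → Finset (Fin d → ℤ) := fun N => Finset.Icc (fun _ => -(N:ℤ)) (fun _ => (N:ℤ))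
    with hZ
  set sN : ℕ → Set (Rd d) := fun N => {x | gridMap δ x ∈ Z N} with hsN
  have hsNmeas : ∀ N, MeasurableSet (sN N) := fun N =>
    measurable_gridMap δ ((Z N : Set (Fin d → ℤ)).to_countable.measurableSet)
  have hsNmono : Monotone sN := by
    intro N N' hNN' x hx
    simp only [hsN, Set.mem_setOf_eq] at hx ⊢
    have hcast : (N : ℤ) ≤ (N' : ℤ) := by exact_mod_cast hNN'
    refine Finset.Icc_subset_Icc ?_ ?_ hx
    · intro i
      exact neg_le_neg hcast
    · intro i
      exact hcast
  have hsUnion : (⋃ N, sN N) = Set.univ := by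
    refine Set.eq_univ_of_forall fun x => Set.mem_iUnion.2 ?_
    refine ⟨Finset.univ.sup fun i => (gridMap δ x i).natAbs, ?_⟩
    simp only [hsN, Set.mem_setOf_eq, hZ, Finset.mem_Icc, Pi.le_def]
    constructor
    · intro i
      have h1 : (gridMap δ x i).natAbs ≤ Finset.univ.sup fun i => (gridMap δ x i).natAbs := by
        exact Finset.le_sup (f := fun i => (gridMap δ x i).natAbs) (Finset.mem_univ i)
      omega
    · intro i
      have h1 : (gridMap δ x i).natAbs ≤ Finset.univ.sup fun i => (gridMap δ x i).natAbs := by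
        exact Finset.le_sup (f := fun i => (gridMap δ x i).natAbs) (Finset.mem_univ i)
      omega
  have htail : ∃ N0 : ℕ, μ1 ((sN N0)ᶜ) ≤ ENNReal.ofReal (η / 4) := by
    have h1 : Tendsto (fun N => μ1 (sN N)) atTop (nhds (μ1 (⋃ N, sN N))) :=
      tendsto_measure_iUnion_atTop hsNmono
    rw [hsUnion] at h1
    have h2 : Tendsto (fun N => (μ1 (sN N)).toReal) atTop (nhds ((μ1 Set.univ).toReal)) :=
      (ENNReal.tendsto_toReal (measure_ne_top _ _)).comp h1
    obtain ⟨N0, hN0⟩ := Metric.tendsto_atTop.1 h2 (η / 4) (by positivity)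
    refine ⟨N0, ?_⟩
    have h4 := hN0 N0 le_rfl
    rw [Real.dist_eq] at h4
    rw [measure_compl (hsNmeas N0) (measure_ne_top _ _)]
    have h6 : (μ1 Set.univ).toReal - (μ1 (sN N0)).toReal ≤ η / 4 := by
      have h5 := abs_lt.1 h4
      linarith [h5.1, h5.2]
    have h7 : μ1 Set.univ - μ1 (sN N0)
        = ENNReal.ofReal ((μ1 Set.univ).toReal - (μ1 (sN N0)).toReal) := by
      rw [ENNReal.ofReal_sub _ ENNReal.toReal_nonneg,
        ENNReal.ofReal_toReal (measure_ne_top _ _),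
        ENNReal.ofReal_toReal (measure_ne_top _ _)]
    rw [h7]
    exact ENNReal.ofReal_le_ofReal h6
  obtain ⟨N0, hN0⟩ := htail
  set U : Set (Rd d) := (sN N0)ᶜ with hU
  have hUmeas : MeasurableSet U := (hsNmeas N0).compl
  -- eventual closeness on the finitely many central cells
  set c : ℝ := η / (4 * (((Z N0).card : ℝ) + 1)) with hc
  have hcpos : 0 < c := div_pos (by rw [hηdef]; positivity)
    (by have := Nat.cast_nonneg (α := ℝ) (Z N0).card; linarith)
  have hev : ∀ᶠ n in atTop, ∀ z ∈ Z N0,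
      |(σn (φ n) (gridCell δ z)).toReal - Lf (gridCell δ z)| < c := by
    rw [Filter.eventually_all_finset]
    intro z _
    have h1 : Tendsto (fun nn => (σn (φ nn) (gridCell δ z)).toReal) atTop
        (nhds (Lf (gridCell δ z))) := hφconv (j, z)
    obtain ⟨N1, hN1⟩ := Metric.tendsto_atTop.1 h1 c hcpos
    refine Filter.eventually_atTop.2 ⟨N1, fun nn hnn => ?_⟩
    have h2 := hN1 nn hnn
    rwa [Real.dist_eq] at h2
  obtain ⟨N1, hN1⟩ := Filter.eventually_atTop.1 hev
  refine ⟨N1, fun n hn => ?_⟩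
  -- the key summed-mass estimate
  have hDn : (∑' z : Fin d → ℤ,
      ((σn (φ n) (gridCell δ z) - min (σn (φ n) (gridCell δ z)) (σ' (gridCell δ z)))
        + (σ' (gridCell δ z) - min (σn (φ n) (gridCell δ z)) (σ' (gridCell δ z)))))
      ≤ ENNReal.ofReal η := by
    set A : (Fin d → ℤ) → ℝ≥0∞ := fun z => σn (φ n) (gridCell δ z) with hA
    set B : (Fin d → ℤ) → ℝ≥0∞ := fun z => σ' (gridCell δ z) with hB
    set e : (Fin d → ℤ) → ℝ≥0∞ :=
      fun z => (A z - min (A z) (B z)) + (B z - min (A z) (B z)) with he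
    have hfin : (∑' z, if z ∈ Z N0 then e z else 0) ≤ ENNReal.ofReal (η / 4) := by
      rw [tsum_eq_sum (s := Z N0) (fun z hz => if_neg hz)]
      have h1 : ∀ z ∈ Z N0, (if z ∈ Z N0 then e z else 0) ≤ ENNReal.ofReal c := by
        intro z hz
        rw [if_pos hz]
        have h2 : e z = ENNReal.ofReal |(A z).toReal - (B z).toReal| :=
          ennreal_err (A z) (B z) (measure_ne_top _ _) (measure_ne_top _ _)
        rw [h2]
        refine ENNReal.ofReal_le_ofReal ?_
        have h3 : (B z).toReal = Lf (gridCell δ z) := by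
          have h4 : B z = ENNReal.ofReal (Lf (gridCell δ z)) :=
            hσ'app _ (measurableSet_gridCell δ z)
          rw [h4, ENNReal.toReal_ofReal (hLnn _)]
        rw [h3]
        exact (hN1 n hn z hz).le
      calc (∑ z ∈ Z N0, if z ∈ Z N0 then e z else 0)
          ≤ ∑ _z ∈ Z N0, ENNReal.ofReal c := Finset.sum_le_sum h1
        _ = ((Z N0).card : ℝ≥0∞) * ENNReal.ofReal c := by
            rw [Finset.sum_const, nsmul_eq_mul]
        _ ≤ ENNReal.ofReal (η / 4) := by
            rw [← ENNReal.ofReal_natCast ((Z N0).card),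
              ← ENNReal.ofReal_mul (Nat.cast_nonneg _)]
            refine ENNReal.ofReal_le_ofReal ?_
            rw [hc, ← mul_div_assoc]
            rw [div_le_div_iff₀ (by have := Nat.cast_nonneg (α := ℝ) (Z N0).card; linarith)
              (by norm_num : (0:ℝ) < 4)]
            nlinarith [Nat.cast_nonneg (α := ℝ) (Z N0).card, hη]
    have htailsum : (∑' z, if z ∈ Z N0 then 0 else A z + B z)
        ≤ ENNReal.ofReal (η / 2) := by
      have h1 : ∀ z, (if z ∈ Z N0 then 0 else A z + B z)
          ≤ σn (φ n) (gridCell δ z ∩ U) + σ' (gridCell δ z ∩ U) := by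
        intro z
        by_cases hz : z ∈ Z N0
        · rw [if_pos hz]; exact zero_le
        · rw [if_neg hz]
          have hsub : gridCell δ z ⊆ U := by
            intro x hx
            have hxz : gridMap δ x = z := hx
            intro hmem
            have h2 : gridMap δ x ∈ Z N0 := hmem
            rw [hxz] at h2
            exact hz h2
          rw [Set.inter_eq_self_of_subset_left hsub]
      refine (ENNReal.tsum_le_tsum h1).trans ?_
      rw [ENNReal.tsum_add]
      have h2 := measure_iUnion (μ := σn (φ n)) (f := fun z => gridCell δ z ∩ U)
        (fun z z' hzz' => ((pairwise_disjoint_gridCell δ hzz').mono inf_le_left inf_le_left))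
        (fun z => (measurableSet_gridCell δ z).inter hUmeas)
      have h3 := measure_iUnion (μ := σ') (f := fun z => gridCell δ z ∩ U)
        (fun z z' hzz' => ((pairwise_disjoint_gridCell δ hzz').mono inf_le_left inf_le_left))
        (fun z => (measurableSet_gridCell δ z).inter hUmeas)
      have hUnion : (⋃ z, gridCell δ z ∩ U) = U := by
        rw [← Set.iUnion_inter, iUnion_gridCell, Set.univ_inter]
      rw [hUnion] at h2 h3
      rw [← h2, ← h3]
      calc σn (φ n) U + σ' U ≤ μ1 U + μ1 U :=
          add_le_add (Measure.le_iff'.1 (hσle _) U) (Measure.le_iff'.1 hσ'le U)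
        _ ≤ ENNReal.ofReal (η / 4) + ENNReal.ofReal (η / 4) := add_le_add hN0 hN0
        _ = ENNReal.ofReal (η / 2) := by
            rw [← ENNReal.ofReal_add (by positivity) (by positivity)]
            congr 1
            ring
    have hsplit : ∀ z, e z ≤ (if z ∈ Z N0 then e z else 0)
        + (if z ∈ Z N0 then 0 else A z + B z) := by
      intro z
      by_cases hz : z ∈ Z N0
      · rw [if_pos hz, if_pos hz, add_zero]
      · rw [if_neg hz, if_neg hz, zero_add]
        exact add_le_add tsub_le_self tsub_le_self
    calc (∑' z, e z) ≤ ∑' z, ((if z ∈ Z N0 then e z else 0)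
          + (if z ∈ Z N0 then 0 else A z + B z)) := ENNReal.tsum_le_tsum hsplit
      _ = (∑' z, if z ∈ Z N0 then e z else 0)
          + ∑' z, (if z ∈ Z N0 then 0 else A z + B z) := ENNReal.tsum_add
      _ ≤ ENNReal.ofReal (η / 4) + ENNReal.ofReal (η / 2) := add_le_add hfin htailsum
      _ ≤ ENNReal.ofReal η := by
          rw [← ENNReal.ofReal_add (by positivity) (by positivity)]
          exact ENNReal.ofReal_le_ofReal (by linarith)
  -- apply the coupling estimate
  haveI := hfinσn (φ n)
  haveI := hfinτn (φ n)
  have hW := W2S_le_of_grid hδ0 hδ1 hη (σn (φ n)) (τn (φ n)) σ' τ'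
    (by rw [hρn (φ n), hρ']) (hprobn (φ n)) hDn
  rw [← hdec (φ n), ← hν] at hW
  rw [Real.dist_eq, sub_zero, abs_of_nonneg (W2S_nonneg _ _)]
  refine lt_of_le_of_lt hW ?_
  have h1 : δ ^ 2 + 4 * η ≤ ε ^ 2 / 2 := by
    rw [hηdef]
    nlinarith [hδε, hδ0.le, hε]
  calc Real.sqrt (δ ^ 2 + 4 * η) ≤ Real.sqrt (ε ^ 2 / 2) := Real.sqrt_le_sqrt h1
    _ < Real.sqrt (ε ^ 2) := Real.sqrt_lt_sqrt (by positivity) (by nlinarith)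
    _ = ε := Real.sqrt_sq hε.le

end MFOS
end
end

section
/- Boundary behavior of classical solutions: let u ∈ C_2^{1,2}([0,T]×P_2(S)) be a classical solution of the obstacle problem on the Wasserstein space (min_{m' ∈ C_u(t,m)} [ −(𝕃u + F)(t,m') ] = 0, D_I u(t,m,·) ≥ 0, u(T,·) = g, with C_u(t,m) := { m' ⪯ m : u(t,m') = u(t,m) }). Then for every m ∈ ∂P_2(S) := { m ∈ P_2(S) : m(ℝ^d×{1}) = 0 } (i.e. all particles are stopped) and every t ∈ [0,T], u(t,m) = g(m). -/
open MeasureTheory Filter Set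
open scoped ENNReal NNReal

noncomputable section

namespace MFOS

/- On the boundary no particle survives, so the only admissible stopping strategy
`m' ⪯ m` is `m` itself, and there `𝕃u(t,m) = ∂ₜu(t,m)` and `F(t,m) = 0`. The obstacle
equation thus reduces to `∂ₜu(t,m) = 0` on `[0,T)`, so `u(·,m)` is constant on `[0,T]`
and equals its terminal value `g(m)`. -/

theorem constant_of_hasDerivWithinAt_Icc_zero {f f' : ℝ → ℝ} {a b : ℝ}
    (hf : ∀ x ∈ Icc a b, HasDerivWithinAt f (f' x) (Icc a b) x)
    (hf' : ∀ x ∈ Ico a b, f' x = 0) : ∀ x ∈ Icc a b, f x = f a := by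
  refine constant_of_has_deriv_right_zero (fun x hx => (hf x hx).continuousWithinAt)
    fun x hx => ?_
  have hderiv := hf x (Ico_subset_Icc_self hx)
  rw [hf' x hx] at hderiv
  exact hderiv.mono_of_mem_nhdsWithin <| mem_of_superset
    (Icc_mem_nhdsGE_of_mem ⟨le_rfl, hx.2⟩) (Icc_subset_Icc_left hx.1)

section Boundary

variable {d : ℕ}

theorem slice_apply_preimage_prodMk (m : Measure (Sd d)) (i : Bool) {s : Set (Sd d)}
    (hs : MeasurableSet s) :
    slice m i ((·, i) ⁻¹' s) = m (s ∩ Prod.snd ⁻¹' {i}) := by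
  have hs' : MeasurableSet ((·, i) ⁻¹' s : Set (Rd d)) := hs.preimage measurable_prodMk_right
  rw [slice, Measure.map_apply measurable_fst hs',
    Measure.restrict_apply (hs'.preimage measurable_fst)]
  congr 1
  ext ⟨x, j⟩
  constructor <;> rintro ⟨hx, rfl : j = i⟩ <;> exact ⟨hx, rfl⟩

theorem ext_of_slice {m m' : Measure (Sd d)} (h : ∀ i, slice m i = slice m' i) :
    m = m' := by
  ext s hs
  have hsplit : ∀ μ : Measure (Sd d),
      μ s = μ (s ∩ Prod.snd ⁻¹' {true}) + μ (s ∩ Prod.snd ⁻¹' {false}) := by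
    intro μ
    have hcompl : s \ Prod.snd ⁻¹' {true} = s ∩ Prod.snd ⁻¹' {false} := by
      ext ⟨x, j⟩
      cases j <;> simp
    rw [← measure_inter_add_sdiff s ((measurableSet_singleton true).preimage measurable_snd),
      hcompl]
  simp only [hsplit m, hsplit m', ← slice_apply_preimage_prodMk _ _ hs, h]

theorem slice_true_eq_zero {m : Measure (Sd d)} (h : m {p : Sd d | p.2 = true} = 0) :
    slice m true = 0 := by
  have hrestrict : m.restrict (Prod.snd ⁻¹' {true}) = 0 := Measure.restrict_eq_zero.mpr h
  rw [slice, hrestrict, Measure.map_zero]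

theorem StopOrder.eq_of_slice_true_eq_zero {m' m : Measure (Sd d)} (h : StopOrder m' m)
    (hm : slice m true = 0) : m' = m := by
  obtain ⟨p, -, -, htrue, hfalse⟩ := h
  refine ext_of_slice ?_
  rintro (_ | _) <;> simp [htrue, hfalse, hm, withDensity_zero_left]

theorem Fint_of_slice_true_eq_zero (f : ℝ → Rd d → Measure (Sd d) → ℝ) (t : ℝ)
    {m : Measure (Sd d)} (hm : slice m true = 0) : Fint f t m = 0 := by
  simp [Fint, hm]

variable {T : ℝ} (b : ℝ → Rd d → Measure (Sd d) → Rd d)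
  (σm : ℝ → Rd d → Measure (Sd d) → Matrix (Fin d) (Fin d) ℝ)
  {u : ℝ → Measure (Sd d) → ℝ} (C : C12S d T u)

theorem Lop_of_slice_true_eq_zero (t : ℝ) {m : Measure (Sd d)} (hm : slice m true = 0) :
    Lop b σm C t m = C.dt t m := by
  simp [Lop, hm]

theorem C12S.dt_eq_zero_of_zero_mem_obstacleSet (f : ℝ → Rd d → Measure (Sd d) → ℝ)
    {t : ℝ} {m : Measure (Sd d)} (h : 0 ∈ obstacleSet b σm C (Fint f) t m)
    (hm : slice m true = 0) : C.dt t m = 0 := by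
  obtain ⟨m', -, hm'm, -, hzero⟩ := h
  rw [hm'm.eq_of_slice_true_eq_zero hm, Lop_of_slice_true_eq_zero b σm C t hm,
    Fint_of_slice_true_eq_zero f t hm] at hzero
  linarith

end Boundary

theorem boundary_behavior_general
    (d : ℕ) (T : ℝ)
    (b : ℝ → Rd d → Measure (Sd d) → Rd d)
    (σm : ℝ → Rd d → Measure (Sd d) → Matrix (Fin d) (Fin d) ℝ)
    (f : ℝ → Rd d → Measure (Sd d) → ℝ) (g : Measure (Rd d) → ℝ)
    (u : ℝ → Measure (Sd d) → ℝ) (C : C12S d T u)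
    (hmin : ∀ t ∈ Ico (0:ℝ) T, ∀ m, MemP2S m →
      IsLeast (obstacleSet b σm C (Fint f) t m) 0)
    (hterm : ∀ m, MemP2S m → u T m = gext g m) :
    ∀ m, MemP2S m → m {p : Sd d | p.2 = true} = 0 →
      ∀ t ∈ Icc (0:ℝ) T, u t m = gext g m := by
  intro m hm hbdry t ht
  have hconst : ∀ s ∈ Icc (0:ℝ) T, u s m = u 0 m :=
    constant_of_hasDerivWithinAt_Icc_zero (fun s hs => C.dt_spec s hs m hm) fun s hs =>
      C.dt_eq_zero_of_zero_mem_obstacleSet b σm f (hmin s hs m hm).1 (slice_true_eq_zero hbdry)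
  rw [hconst t ht, ← hconst T ⟨ht.1.trans ht.2, le_rfl⟩, hterm m hm]

/-- **Boundary behavior of classical solutions** (Remark 4.3 (iv)): if
`u ∈ C²₂([0,T] × P₂(S))` is a classical solution of the obstacle problem on the
Wasserstein space, then `u(t,m) = g(m)` for every `t ∈ [0,T]` and every
`m ∈ ∂P₂(S) = {m : m(ℝ^d × {1}) = 0}` (all particles stopped). -/
theorem boundary_behavior
    (d : ℕ) (T : ℝ) (hT : 0 < T)
    (b : ℝ → Rd d → Measure (Sd d) → Rd d)
    (σm : ℝ → Rd d → Measure (Sd d) → Matrix (Fin d) (Fin d) ℝ)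
    (f : ℝ → Rd d → Measure (Sd d) → ℝ) (g : Measure (Rd d) → ℝ)
    (hb : CoeffAssumption d T b σm) (hf : CostAssumption d T f)
    (hg : TerminalAssumption d g)
    (u : ℝ → Measure (Sd d) → ℝ) (C : C12S d T u)
    (hmin : ∀ t ∈ Ico (0:ℝ) T, ∀ m, MemP2S m →
      IsLeast (obstacleSet b σm C (Fint f) t m) 0)
    (hDI : ∀ t ∈ Ico (0:ℝ) T, ∀ m, MemP2S m → ∀ x, 0 ≤ DIu C t m x)
    (hterm : ∀ m, MemP2S m → u T m = gext g m) :
    ∀ m, MemP2S m → m {p : Sd d | p.2 = true} = 0 →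
      ∀ t ∈ Icc (0:ℝ) T, u t m = gext g m :=
  boundary_behavior_general d T b σm f g u C hmin hterm

end MFOS
end
end
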